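/- arXiv:2408.08994 — 10 statements merged into one kernel-verified Lean document; each statement's English description precedes it below -/
import Mathlib

section
/- Let X be a finite set, let p and q be probability mass functions on X, and let v : X → ℝ satisfy 0 ≤ v(x) ≤ 1 for all x ∈ X. Then |E_p[v] − E_q[v]| ≤ 4·√(Var_p(v) · D_△(p‖q)) + 5·D_△(p‖q). -/
open Finset

/-- `p` is a probability mass function on the finite set `X`. -/
def IsPMF {X : Type*} [Fintype X] (p : X → ℝ) : Prop :=
  (∀ x, 0 ≤ p x) ∧ ∑ x, p x = 1

/-- Expectation of `v` under `p`. -/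
noncomputable def expect {X : Type*} [Fintype X] (p v : X → ℝ) : ℝ := ∑ x, p x * v x

/-- Variance of `v` under `p`. -/
noncomputable def pmfVar {X : Type*} [Fintype X] (p v : X → ℝ) : ℝ :=
  ∑ x, p x * (v x - expect p v) ^ 2

/-- Triangular discrimination `D_△(p‖q)` (terms with `p x + q x = 0` count as `0`,
which is automatic since `0 / 0 = 0` in Lean). -/
noncomputable def triDisc {X : Type*} [Fintype X] (p q : X → ℝ) : ℝ :=
  ∑ x, (p x - q x) ^ 2 / (p x + q x)

/-!
Centre `v` at `μ = E_p[v]` and put `u = v - μ`, `S = ∑ (p + q) u²`, `D = D_△(p‖q)`.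
Cauchy–Schwarz with weights `p + q` gives `(E_p[v] - E_q[v])² = (∑ (p - q) u)² ≤ D S`, and
likewise `(∑ (q - p) u²)² ≤ D ∑ (p + q) u⁴ ≤ D S` because `|u| ≤ 1`. Since
`S = 2 Var_p(v) + ∑ (q - p) u²`, this yields `S ≤ 2 Var_p(v) + √(D S)`, a quadratic inequality
in `√S` whose solution `√S ≤ √D + √(2 Var_p(v))` turns the first bound into
`|E_p[v] - E_q[v]| ≤ √(2 Var_p(v) D) + D`.
-/

lemma le_add_of_sq_le_sq_add_mul {s d w : ℝ} (hd : 0 ≤ d) (hw : 0 ≤ w)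
    (h : s ^ 2 ≤ w ^ 2 + d * s) : s ≤ d + w := by
  nlinarith

lemma sq_sub_mul_le_div_mul {a b : ℝ} (ha : 0 ≤ a) (hb : 0 ≤ b) (w : ℝ) :
    ((a - b) * w) ^ 2 ≤ (a - b) ^ 2 / (a + b) * ((a + b) * w ^ 2) := by
  rcases (add_nonneg ha hb).eq_or_lt' with hab | hab
  · obtain rfl : a = 0 := by linarith
    obtain rfl : b = 0 := by linarith
    simp
  · rw [← mul_assoc, div_mul_cancel₀ _ hab.ne', mul_pow]

section

variable {X : Type*} [Fintype X] {p q : X → ℝ}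

lemma triDisc_nonneg (hp : ∀ x, 0 ≤ p x) (hq : ∀ x, 0 ≤ q x) : 0 ≤ triDisc p q :=
  sum_nonneg fun x _ => div_nonneg (sq_nonneg _) (add_nonneg (hp x) (hq x))

lemma pmfVar_nonneg (hp : ∀ x, 0 ≤ p x) (v : X → ℝ) : 0 ≤ pmfVar p v :=
  sum_nonneg fun x _ => mul_nonneg (hp x) (sq_nonneg _)

lemma sq_sum_sub_mul_le_triDisc_mul (hp : ∀ x, 0 ≤ p x) (hq : ∀ x, 0 ≤ q x) (w : X → ℝ) :
    (∑ x, (p x - q x) * w x) ^ 2 ≤ triDisc p q * ∑ x, (p x + q x) * w x ^ 2 :=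
  sum_sq_le_sum_mul_sum_of_sq_le_mul _
    (fun x _ => div_nonneg (sq_nonneg _) (add_nonneg (hp x) (hq x)))
    (fun x _ => mul_nonneg (add_nonneg (hp x) (hq x)) (sq_nonneg _))
    (fun x _ => sq_sub_mul_le_div_mul (hp x) (hq x) (w x))

lemma expect_sub_expect_eq_sum (hp : ∑ x, p x = 1) (hq : ∑ x, q x = 1) (v : X → ℝ) (c : ℝ) :
    expect p v - expect q v = ∑ x, (p x - q x) * (v x - c) := by
  simp only [_root_.expect, mul_sub, sub_mul, sum_sub_distrib, ← sum_mul, hp, hq]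
  ring

lemma sq_sub_expect_le_one (hp : IsPMF p) {v : X → ℝ} (hv : ∀ x, 0 ≤ v x ∧ v x ≤ 1) (x : X) :
    (v x - expect p v) ^ 2 ≤ 1 := by
  have h0 : 0 ≤ expect p v := sum_nonneg fun y _ => mul_nonneg (hp.1 y) (hv y).1
  have h1 : expect p v ≤ 1 :=
    hp.2 ▸ sum_le_sum fun y _ => mul_le_of_le_one_right (hp.1 y) (hv y).2
  nlinarith [hv x]

theorem abs_expect_sub_expect_le (hp : IsPMF p) (hq : IsPMF q) {v : X → ℝ}
    (hv : ∀ x, 0 ≤ v x ∧ v x ≤ 1) :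
    |expect p v - expect q v| ≤ √(2 * pmfVar p v * triDisc p q) + triDisc p q := by
  set u : X → ℝ := fun x => v x - expect p v
  set D := triDisc p q
  set V := pmfVar p v
  set S := ∑ x, (p x + q x) * u x ^ 2
  have hD : 0 ≤ D := triDisc_nonneg hp.1 hq.1
  have hV : 0 ≤ V := pmfVar_nonneg hp.1 v
  have hS : 0 ≤ S := sum_nonneg fun x _ => mul_nonneg (add_nonneg (hp.1 x) (hq.1 x)) (sq_nonneg _)
  have hmean : (expect p v - expect q v) ^ 2 ≤ D * S := by
    rw [expect_sub_expect_eq_sum hp.2 hq.2 v (expect p v)]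
    exact sq_sum_sub_mul_le_triDisc_mul hp.1 hq.1 u
  have hfourth : (∑ x, (p x - q x) * u x ^ 2) ^ 2 ≤ D * S := by
    refine (sq_sum_sub_mul_le_triDisc_mul hp.1 hq.1 (u · ^ 2)).trans
      (mul_le_mul_of_nonneg_left (sum_le_sum fun x _ => ?_) hD)
    have hu : u x ^ 2 ≤ 1 := sq_sub_expect_le_one hp hv x
    exact mul_le_mul_of_nonneg_left (pow_le_of_le_one (sq_nonneg _) hu two_ne_zero)
      (add_nonneg (hp.1 x) (hq.1 x))
  have hS_le : S ≤ 2 * V + √(D * S) := by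
    have hsplit : S = 2 * V - ∑ x, (p x - q x) * u x ^ 2 := by
      simp only [S, V, pmfVar, two_mul, sub_eq_add_neg, ← sum_neg_distrib, mul_sum,
        ← sum_add_distrib]
      exact sum_congr rfl fun x _ => by ring
    have := neg_le_abs (∑ x, (p x - q x) * u x ^ 2)
    linarith [Real.abs_le_sqrt hfourth]
  have hroot : √S ≤ √D + √(2 * V) := by
    refine le_add_of_sq_le_sq_add_mul (Real.sqrt_nonneg _) (Real.sqrt_nonneg _) ?_
    rwa [Real.sq_sqrt hS, Real.sq_sqrt (mul_nonneg zero_le_two hV), ← Real.sqrt_mul hD]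
  calc |expect p v - expect q v| ≤ √D * √S := by
        rw [← Real.sqrt_mul hD]; exact Real.abs_le_sqrt hmean
    _ ≤ √D * (√D + √(2 * V)) := mul_le_mul_of_nonneg_left hroot (Real.sqrt_nonneg _)
    _ = √(2 * V * D) + D := by
        rw [mul_add, Real.mul_self_sqrt hD, ← Real.sqrt_mul hD, mul_comm D, add_comm]

end

/-- For pmfs `p, q` on a finite set `X` and `v : X → [0,1]`,
`|E_p[v] − E_q[v]| ≤ 4·√(Var_p(v)·D_△(p‖q)) + 5·D_△(p‖q)`. -/
theorem mean_diff_le_triDisc {X : Type*} [Fintype X] (p q v : X → ℝ)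
    (hp : IsPMF p) (hq : IsPMF q) (hv : ∀ x, 0 ≤ v x ∧ v x ≤ 1) :
    |expect p v - expect q v| ≤
      4 * Real.sqrt (pmfVar p v * triDisc p q) + 5 * triDisc p q := by
  have hD := triDisc_nonneg hp.1 hq.1
  have hsqrt : √(2 * pmfVar p v * triDisc p q) ≤ 2 * √(pmfVar p v * triDisc p q) := by
    rw [mul_assoc, Real.sqrt_mul zero_le_two]
    have : √2 ≤ 2 := Real.sqrt_le_iff.2 ⟨zero_le_two, by norm_num⟩
    exact mul_le_mul_of_nonneg_right this (Real.sqrt_nonneg _)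
  have := abs_expect_sub_expect_le hp hq hv
  linarith [Real.sqrt_nonneg (pmfVar p v * triDisc p q)]
end

section
/- Let X be a finite set, let p and q be probability mass functions on X, and let v : X → ℝ satisfy 0 ≤ v(x) ≤ 1 for all x ∈ X. Then |E_p[v] − E_q[v]| ≤ 8·√(Var_p(v) · H²(p‖q)) + 20·H²(p‖q). -/
open Finset

/-- Squared Hellinger distance `H²(p‖q)`. -/
noncomputable def hellingerSq {X : Type*} [Fintype X] (p q : X → ℝ) : ℝ :=
  (1 / 2) * ∑ x, (Real.sqrt (p x) - Real.sqrt (q x)) ^ 2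

lemma sqrt_add_le' (x y : ℝ) (hx : 0 ≤ x) (hy : 0 ≤ y) :
    Real.sqrt (x + y) ≤ Real.sqrt x + Real.sqrt y := by
  have h : x + y ≤ (Real.sqrt x + Real.sqrt y) ^ 2 := by
    have hx' := Real.sq_sqrt hx
    have hy' := Real.sq_sqrt hy
    have := mul_nonneg (Real.sqrt_nonneg x) (Real.sqrt_nonneg y)
    nlinarith
  calc Real.sqrt (x + y) ≤ Real.sqrt ((Real.sqrt x + Real.sqrt y) ^ 2) :=
        Real.sqrt_le_sqrt h
    _ = Real.sqrt x + Real.sqrt y :=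
        Real.sqrt_sq (by positivity)

/-- For pmfs `p, q` on a finite set `X` and `v : X → [0,1]`,
`|E_p[v] − E_q[v]| ≤ 8·√(Var_p(v)·H²(p‖q)) + 20·H²(p‖q)`. -/
theorem mean_diff_le_hellingerSq {X : Type*} [Fintype X] (p q v : X → ℝ)
    (hp : IsPMF p) (hq : IsPMF q) (hv : ∀ x, 0 ≤ v x ∧ v x ≤ 1) :
    |expect p v - expect q v| ≤
      8 * Real.sqrt (pmfVar p v * hellingerSq p q) + 20 * hellingerSq p q := by
  set μ := expect p v with hμdef
  set H := hellingerSq p q with hHdef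
  set V := pmfVar p v with hVdef
  have hH0 : 0 ≤ H := by
    rw [hHdef, hellingerSq]
    positivity
  have hV0 : 0 ≤ V := by
    rw [hVdef, pmfVar]
    exact Finset.sum_nonneg fun x _ => mul_nonneg (hp.1 x) (sq_nonneg _)
  -- μ ∈ [0,1]
  have hμ0 : 0 ≤ μ := Finset.sum_nonneg fun x _ => mul_nonneg (hp.1 x) (hv x).1
  have hμ1 : μ ≤ 1 := by
    calc μ ≤ ∑ x, p x * 1 := Finset.sum_le_sum fun x _ =>
          mul_le_mul_of_nonneg_left (hv x).2 (hp.1 x)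
      _ = 1 := by simp [hp.2]
  have habs : ∀ x, |v x - μ| ≤ 1 := fun x => by
    rw [abs_le]; constructor <;> [linarith [(hv x).1]; linarith [(hv x).2]]
  -- Step 1: rewrite the difference of expectations
  have hdiff : expect p v - expect q v = ∑ x, (p x - q x) * (v x - μ) := by
    have h1 : ∑ x, (p x - q x) * (v x - μ)
        = ((∑ x, p x * v x) - (∑ x, p x) * μ) - ((∑ x, q x * v x) - (∑ x, q x) * μ) := by
      simp only [sub_mul, mul_sub, Finset.sum_sub_distrib, ← Finset.sum_mul]
      ring
    rw [h1, hp.2, hq.2]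
    show (∑ x, p x * v x) - (∑ x, q x * v x) = _
    ring
  -- abbreviations
  set a : X → ℝ := fun x => |Real.sqrt (p x) - Real.sqrt (q x)| with ha
  set b : X → ℝ := fun x => (Real.sqrt (p x) + Real.sqrt (q x)) * |v x - μ| with hb
  have hbnn : ∀ x, 0 ≤ b x := fun x => mul_nonneg (by positivity) (abs_nonneg _)
  -- Step 2: |Δ| ≤ ∑ a * b
  have step2 : |expect p v - expect q v| ≤ ∑ x, a x * b x := by
    rw [hdiff]
    calc |∑ x, (p x - q x) * (v x - μ)| ≤ ∑ x, |(p x - q x) * (v x - μ)| :=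
          Finset.abs_sum_le_sum_abs _ _
      _ = ∑ x, a x * b x := by
          refine Finset.sum_congr rfl fun x _ => ?_
          rw [abs_mul, ha, hb]
          have hpq : p x - q x
              = (Real.sqrt (p x) - Real.sqrt (q x)) * (Real.sqrt (p x) + Real.sqrt (q x)) := by
            have h1 := Real.sq_sqrt (hp.1 x)
            have h2 := Real.sq_sqrt (hq.1 x)
            nlinarith
          rw [hpq, abs_mul, abs_of_nonneg (show (0:ℝ) ≤ Real.sqrt (p x) + Real.sqrt (q x) by
            positivity)]
          ring
  -- sums of squares
  have ha2 : ∑ x, a x ^ 2 = 2 * H := by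
    rw [hHdef, hellingerSq]
    rw [ha]
    simp only [sq_abs]
    ring
  set S := ∑ x, b x ^ 2 with hS
  have hS0 : 0 ≤ S := Finset.sum_nonneg fun x _ => sq_nonneg _
  -- Step 3: Cauchy–Schwarz
  have step3 : |expect p v - expect q v| ≤ Real.sqrt (2 * H * S) := by
    refine step2.trans ?_
    have hcs := Finset.sum_mul_sq_le_sq_mul_sq Finset.univ a b
    rw [ha2] at hcs
    have hnn : 0 ≤ ∑ x, a x * b x :=
      Finset.sum_nonneg fun x _ => mul_nonneg (abs_nonneg _) (hbnn x)
    have := Real.sqrt_le_sqrt hcs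
    rwa [Real.sqrt_sq hnn] at this
  -- Step 4: S ≤ 8V + 4H
  have step4 : S ≤ 8 * V + 4 * H := by
    have hpt : ∀ x, b x ^ 2 ≤ 8 * (p x * (v x - μ) ^ 2)
        + 2 * (Real.sqrt (p x) - Real.sqrt (q x)) ^ 2 := by
      intro x
      rw [hb]
      have h1 := Real.sq_sqrt (hp.1 x)
      have hsq : |v x - μ| ^ 2 = (v x - μ) ^ 2 := sq_abs _
      have hle1 : (v x - μ) ^ 2 ≤ 1 := by
        have := habs x
        nlinarith [abs_nonneg (v x - μ), sq_abs (v x - μ)]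
      have hkey : (Real.sqrt (p x) + Real.sqrt (q x)) ^ 2
          ≤ 8 * p x + 2 * (Real.sqrt (p x) - Real.sqrt (q x)) ^ 2 := by
        nlinarith [sq_nonneg (3 * Real.sqrt (p x) - Real.sqrt (q x))]
      calc ((Real.sqrt (p x) + Real.sqrt (q x)) * |v x - μ|) ^ 2
          = (Real.sqrt (p x) + Real.sqrt (q x)) ^ 2 * (v x - μ) ^ 2 := by
            rw [mul_pow, hsq]
        _ ≤ (8 * p x + 2 * (Real.sqrt (p x) - Real.sqrt (q x)) ^ 2) * (v x - μ) ^ 2 :=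
            mul_le_mul_of_nonneg_right hkey (sq_nonneg _)
        _ ≤ 8 * (p x * (v x - μ) ^ 2) + 2 * (Real.sqrt (p x) - Real.sqrt (q x)) ^ 2 := by
            nlinarith [sq_nonneg (Real.sqrt (p x) - Real.sqrt (q x)), sq_nonneg (v x - μ),
              mul_le_of_le_one_right (sq_nonneg (Real.sqrt (p x) - Real.sqrt (q x))) hle1]
    calc S ≤ ∑ x, (8 * (p x * (v x - μ) ^ 2)
          + 2 * (Real.sqrt (p x) - Real.sqrt (q x)) ^ 2) :=
        Finset.sum_le_sum fun x _ => hpt x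
      _ = 8 * V + 4 * H := by
        rw [Finset.sum_add_distrib, ← Finset.mul_sum, ← Finset.mul_sum, hVdef, pmfVar,
          hHdef, hellingerSq]
        ring
  -- Step 5: conclude
  have step5 : Real.sqrt (2 * H * S) ≤ 8 * Real.sqrt (V * H) + 20 * H := by
    have h1 : 2 * H * S ≤ 16 * (V * H) + 8 * H ^ 2 := by nlinarith
    calc Real.sqrt (2 * H * S) ≤ Real.sqrt (16 * (V * H) + 8 * H ^ 2) :=
          Real.sqrt_le_sqrt h1
      _ ≤ Real.sqrt (16 * (V * H)) + Real.sqrt (8 * H ^ 2) :=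
          sqrt_add_le' _ _ (by positivity) (by positivity)
      _ ≤ 8 * Real.sqrt (V * H) + 20 * H := by
          have e1 : Real.sqrt (16 * (V * H)) = 4 * Real.sqrt (V * H) := by
            rw [show (16 : ℝ) * (V * H) = 4 ^ 2 * (V * H) by ring, Real.sqrt_mul (by positivity),
              Real.sqrt_sq (by norm_num)]
          have e2 : Real.sqrt (8 * H ^ 2) ≤ 20 * H := by
            have : Real.sqrt (8 * H ^ 2) ≤ Real.sqrt ((20 * H) ^ 2) := by
              apply Real.sqrt_le_sqrt; nlinarith
            rwa [Real.sqrt_sq (by positivity)] at this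
          have : Real.sqrt (V * H) ≥ 0 := Real.sqrt_nonneg _
          linarith [e1.le, e2]
    
  calc |expect p v - expect q v| ≤ Real.sqrt (2 * H * S) := step3
    _ ≤ 8 * Real.sqrt (V * H) + 20 * H := step5
end

section
/- Let X be a nonempty set and Ψ a nonempty set of functions g : X → ℝ with |g(x)| ≤ 1 for all g ∈ Ψ and x ∈ X. Let λ > 1, n ≥ 1, and x_1,…,x_n ∈ X, and suppose d ∈ ℕ is such that the ℓ1-Eluder dimension of Ψ at scale 1/(8λn) is at most d. Then ∑_{i=1}^n min{ 1, sup_{g∈Ψ} |g(x_i)| / (λ + ∑_{t=1}^{i−1} |g(x_t)|) } ≤ 12·(log₂(4λn))²·d + λ⁻¹. -/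
open Finset

/-- A finite sequence `a : Fin m → X` is `ε`-independent for `Ψ` if for every index `i`
there is `g ∈ Ψ` with `∑_{j<i} |g (a j)| ≤ ε` and `|g (a i)| > ε`. -/
def IsEpsIndep {X : Type*} (Ψ : Set (X → ℝ)) (ε : ℝ) {m : ℕ} (a : Fin m → X) : Prop :=
  ∀ i : Fin m, ∃ g ∈ Ψ, (∑ j ∈ Finset.Iio i, |g (a j)|) ≤ ε ∧ ε < |g (a i)|

/-- The ℓ1-Eluder dimension of `Ψ` at scale `ε₀` is at most `d`: for every `ε ≥ ε₀`,
every `ε`-independent sequence for `Ψ` has length at most `d`. -/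
def EluderDimLE {X : Type*} (Ψ : Set (X → ℝ)) (ε₀ : ℝ) (d : ℕ) : Prop :=
  ∀ ε ≥ ε₀, ∀ m : ℕ, ∀ a : Fin m → X, IsEpsIndep Ψ ε a → m ≤ d

/-!
Indices whose summand is at most `1/(λn)` contribute at most `λ⁻¹`. For each other index `i`
pick `g_i ∈ Ψ` attaining at least half of the supremum, and sort `i` by the dyadic level `k` of
its summand and the dyadic level `j` of the normaliser `λ + ∑_{t<i} |g_i(x_t)|`; each level
takes at most `log₂(4λn)` values. Inside one pair of levels every `g_i` exceeds
`ε = λ 2^j / 2^(k+2)` at `x_i` while its prefix sum is at most `2^(k+3) ε`. Colouring these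
indices greedily with `2^(k+3) + 1` colours so that each `g_i` has mass at most `ε` on the earlier
indices of its own colour makes every colour class an `ε`-independent sequence. Hence a pair of
levels holds at most `(2^(k+3) + 1) d` indices, each contributing at most `2^(-k)`, i.e. at most
`9 d` in total.
-/

section

variable {X ι : Type*} [LinearOrder ι] {Ψ : Set (X → ℝ)}

theorem Finset.map_orderEmbOfFin_Iio (A : Finset ι) {m : ℕ} (h : #A = m) (j : Fin m) :
    (Iio j).map (A.orderEmbOfFin h).toEmbedding = {t ∈ A | t < A.orderEmbOfFin h j} := by
  ext t
  simp only [mem_map, mem_Iio, mem_filter, RelEmbedding.coe_toEmbedding]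
  constructor
  · rintro ⟨j', hj', rfl⟩
    exact ⟨orderEmbOfFin_mem A h j', (A.orderEmbOfFin h).strictMono hj'⟩
  · rintro ⟨htA, ht⟩
    obtain ⟨j', rfl⟩ : t ∈ Set.range (A.orderEmbOfFin h) := by rwa [range_orderEmbOfFin]
    exact ⟨j', (A.orderEmbOfFin h).lt_iff_lt.mp ht, rfl⟩

theorem EluderDimLE.card_le_of_forall_sum_le {ε₀ ε : ℝ} {d : ℕ} (hd : EluderDimLE Ψ ε₀ d)
    (hε : ε₀ ≤ ε) (x : ι → X) (g : ι → X → ℝ) (A : Finset ι)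
    (hA : ∀ i ∈ A, g i ∈ Ψ ∧ ∑ t ∈ A with t < i, |g i (x t)| ≤ ε ∧ ε < |g i (x i)|) :
    #A ≤ d := by
  set e := A.orderEmbOfFin rfl
  refine hd ε hε _ (x ∘ e) fun j => ?_
  obtain ⟨hgΨ, hsum, hgt⟩ := hA (e j) (orderEmbOfFin_mem A rfl j)
  refine ⟨g (e j), hgΨ, ?_, hgt⟩
  calc ∑ j' ∈ Iio j, |g (e j) (x (e j'))|
      = ∑ t ∈ (Iio j).map e.toEmbedding, |g (e j) (x t)| :=
        (sum_map (Iio j) e.toEmbedding fun t => |g (e j) (x t)|).symm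
    _ ≤ ε := by rwa [map_orderEmbOfFin_Iio]

theorem exists_coloring_forall_sum_le {N : ℕ} {ε M : ℝ} (hNε : M < N * ε)
    (w : ι → ι → ℝ) (B : Finset ι) (hB : ∀ i ∈ B, ∑ t ∈ B with t < i, w i t ≤ M) :
    ∃ c : ι → ℕ, ∀ i ∈ B, c i < N ∧ ∑ t ∈ B with c t = c i ∧ t < i, w i t ≤ ε := by
  induction B using Finset.induction_on_max with
  | empty => exact ⟨fun _ => 0, by simp⟩
  | insert a s has ih =>
    obtain ⟨c, hc⟩ := ih fun i hi => by
      have := hB i (mem_insert_of_mem hi)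
      rwa [filter_insert, if_neg (has i hi).not_gt] at this
    have hsa : ∑ t ∈ s, w a t ≤ M := by
      have := hB a (mem_insert_self a s)
      rwa [filter_insert, if_neg (lt_irrefl a), filter_true_of_mem has] at this
    -- the mass `≤ M < N ε` of the earlier indices is shared by `N` colours
    obtain ⟨b, hbN, hb⟩ : ∃ b ∈ range N, ∑ t ∈ s with c t = b, w a t < ε := by
      refine exists_lt_of_sum_lt ?_
      rw [sum_fiberwise_of_maps_to fun t ht => mem_range.2 (hc t ht).1, sum_const, card_range,
        nsmul_eq_mul]
      exact hsa.trans_lt hNε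
    have hupd : ∀ t ∈ s, Function.update c a b t = c t := fun t ht =>
      Function.update_of_ne (has t ht).ne _ _
    refine ⟨Function.update c a b, fun i hi => ?_⟩
    rcases mem_insert.1 hi with rfl | hi
    · rw [Function.update_self, filter_insert, if_neg fun h => lt_irrefl i h.2]
      refine ⟨mem_range.1 hbN, le_of_eq_of_le ?_ hb.le⟩
      exact sum_congr (filter_congr fun t ht => by rw [hupd t ht, and_iff_left (has t ht)])
        fun _ _ => rfl
    · rw [hupd i hi, filter_insert, if_neg fun h => (has i hi).not_gt h.2]
      refine ⟨(hc i hi).1, le_of_eq_of_le ?_ (hc i hi).2⟩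
      exact sum_congr (filter_congr fun t ht => by rw [hupd t ht]) fun _ _ => rfl

theorem EluderDimLE.card_le_mul_of_forall_sum_le {ε₀ ε M : ℝ} {d N : ℕ}
    (hd : EluderDimLE Ψ ε₀ d) (hε : ε₀ ≤ ε) (hNε : M < N * ε) (x : ι → X) (g : ι → X → ℝ)
    (B : Finset ι)
    (hB : ∀ i ∈ B, g i ∈ Ψ ∧ ∑ t ∈ B with t < i, |g i (x t)| ≤ M ∧ ε < |g i (x i)|) :
    #B ≤ N * d := by
  obtain ⟨c, hc⟩ := exists_coloring_forall_sum_le hNε (fun i t => |g i (x t)|) B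
    fun i hi => (hB i hi).2.1
  calc #B = ∑ b ∈ range N, #{i ∈ B | c i = b} :=
        card_eq_sum_card_fiberwise fun i hi => mem_range.2 (hc i hi).1
    _ ≤ ∑ _b ∈ range N, d := sum_le_sum fun b _ =>
        hd.card_le_of_forall_sum_le hε x g _ fun i hi => by
          obtain ⟨hiB, rfl⟩ := mem_filter.1 hi
          refine ⟨(hB i hiB).1, ?_, (hB i hiB).2.2⟩
          simpa only [filter_filter] using (hc i hiB).2
    _ = N * d := by rw [sum_const, card_range, smul_eq_mul]

theorem EluderDimLE.sum_le_nine_mul [LocallyFiniteOrderBot ι] {ε₀ ε : ℝ} {d k : ℕ}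
    (hd : EluderDimLE Ψ ε₀ d) (hε₀ : ε₀ ≤ ε) (hε : 0 < ε) (x : ι → X) (g : ι → X → ℝ)
    (T : ι → ℝ) (B : Finset ι)
    (hB : ∀ i ∈ B, g i ∈ Ψ ∧ ∑ t ∈ Iio i, |g i (x t)| ≤ 2 ^ (k + 3) * ε ∧ ε < |g i (x i)| ∧
      T i ≤ (2 ^ k)⁻¹) :
    ∑ i ∈ B, T i ≤ 9 * d := by
  have hcard : #B ≤ (2 ^ (k + 3) + 1) * d := by
    refine hd.card_le_mul_of_forall_sum_le hε₀ (M := 2 ^ (k + 3) * ε) (by push_cast; linarith) x g B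
      fun i hi => ⟨(hB i hi).1, le_trans ?_ (hB i hi).2.1, (hB i hi).2.2.1⟩
    exact sum_le_sum_of_subset_of_nonneg (fun t ht => mem_Iio.2 (mem_filter.1 ht).2)
      fun _ _ _ => abs_nonneg _
  calc ∑ i ∈ B, T i ≤ #B • (2 ^ k : ℝ)⁻¹ := sum_le_card_nsmul _ _ _ fun i hi => (hB i hi).2.2.2
    _ ≤ ((2 ^ (k + 3) + 1) * d : ℕ) * (2 ^ k : ℝ)⁻¹ := by rw [nsmul_eq_mul]; gcongr
    _ = (8 + (2 ^ k)⁻¹) * d := by push_cast; field_simp; ring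
    _ ≤ 9 * d := by
      have : (2 ^ k : ℝ)⁻¹ ≤ 1 := inv_le_one_of_one_le₀ (one_le_pow₀ one_le_two)
      gcongr
      linarith

theorem exists_dyadic_level {lam T D a : ℝ} {K : ℕ} (hlam : 1 ≤ lam) (hT : (2 ^ K)⁻¹ < T)
    (hT1 : T ≤ 1) (hD : lam ≤ D) (hDK : D < 2 ^ (K + 1)) (ha : T * D < 2 * a) :
    ∃ k < K, ∃ j ≤ K, T ≤ (2 ^ k)⁻¹ ∧ D - lam ≤ 2 ^ (k + 3) * (lam * 2 ^ j / 2 ^ (k + 2)) ∧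
      lam * 2 ^ j / 2 ^ (k + 2) < a := by
  have hT0 : 0 < T := lt_trans (by positivity) hT
  have hlam0 : 0 < lam := by linarith
  obtain ⟨k, hk, hk'⟩ := exists_nat_pow_near ((one_le_inv₀ hT0).2 hT1) one_lt_two
  obtain ⟨j, hj, hj'⟩ := exists_nat_pow_near ((one_le_div hlam0).2 hD) one_lt_two
  rw [le_div_iff₀ hlam0] at hj
  rw [div_lt_iff₀ hlam0, pow_succ] at hj'
  refine ⟨k, ?_, j, ?_, ?_, ?_, ?_⟩
  · refine (pow_lt_pow_iff_right₀ one_lt_two).1 (hk.trans_lt ?_)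
    rwa [inv_lt_comm₀ hT0 (by positivity)]
  · have : (2 : ℝ) ^ j < 2 ^ (K + 1) := by nlinarith [one_le_pow₀ (M₀ := ℝ) (n := j) one_le_two]
    exact Nat.lt_succ_iff.1 ((pow_lt_pow_iff_right₀ one_lt_two).1 this)
  · exact (le_inv_comm₀ hT0 (pow_pos two_pos k)).2 hk
  · rw [show (2 : ℝ) ^ (k + 3) * (lam * 2 ^ j / 2 ^ (k + 2)) = 2 ^ j * lam * 2 by
      field_simp; ring]
    linarith
  · have hTk : (2 ^ (k + 1) : ℝ)⁻¹ < T := (inv_lt_comm₀ hT0 (pow_pos two_pos (k + 1))).1 hk'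
    calc lam * 2 ^ j / 2 ^ (k + 2) = 2 ^ j * lam * (2 ^ (k + 1))⁻¹ / 2 := by
          rw [pow_succ _ (k + 1)]; field_simp
      _ < D * T / 2 := by linarith [mul_lt_mul' hj hTk (by positivity) (by linarith)]
      _ < a := by linarith

theorem EluderDimLE.sum_filter_inv_lt_le [LocallyFiniteOrderBot ι] [Fintype ι] {c lam : ℝ}
    {d K : ℕ} (hd : EluderDimLE Ψ (1 / (8 * c)) d) (hlam : 1 ≤ lam) (hcK : c < 2 ^ K)
    (hKc : 2 ^ K ≤ 2 * c) (x : ι → X) (g : ι → X → ℝ) (T : ι → ℝ)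
    (hg : ∀ i, c⁻¹ < T i → g i ∈ Ψ ∧ T i ≤ 1 ∧ lam + ∑ t ∈ Iio i, |g i (x t)| < 2 ^ (K + 1) ∧
      T i * (lam + ∑ t ∈ Iio i, |g i (x t)|) < 2 * |g i (x i)|) :
    ∑ i with c⁻¹ < T i, T i ≤ 9 * K * (K + 1) * d := by
  have hc : 0 < c := by linarith [pow_pos (two_pos (α := ℝ)) K]
  have hlevel : ∀ i ∈ ({i | c⁻¹ < T i} : Finset ι), ∃ p ∈ range K ×ˢ range (K + 1),
      T i ≤ (2 ^ p.1)⁻¹ ∧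
      ∑ t ∈ Iio i, |g i (x t)| ≤ 2 ^ (p.1 + 3) * (lam * 2 ^ p.2 / 2 ^ (p.1 + 2)) ∧
      lam * 2 ^ p.2 / 2 ^ (p.1 + 2) < |g i (x i)| := by
    intro i hi
    have hci := (mem_filter.1 hi).2
    obtain ⟨-, hT1, hD, ha⟩ := hg i hci
    obtain ⟨k, hk, j, hj, h1, h2, h3⟩ := exists_dyadic_level hlam
      ((inv_lt_inv₀ (by positivity) hc).2 hcK |>.trans hci) hT1
      (le_add_of_nonneg_right (sum_nonneg fun _ _ => abs_nonneg _)) hD ha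
    exact ⟨(k, j), mem_product.2 ⟨mem_range.2 hk, mem_range.2 (Nat.lt_succ_of_le hj)⟩, h1,
      by linarith, h3⟩
  choose! lvl hlvl hfib using hlevel
  rw [← sum_fiberwise_of_maps_to hlvl]
  calc _ ≤ ∑ _p ∈ range K ×ˢ range (K + 1), (9 * d : ℝ) := sum_le_sum fun p hp => ?_
    _ = 9 * K * (K + 1) * d := by
      rw [sum_const, card_product, card_range, card_range, nsmul_eq_mul]; push_cast; ring
  have hscale : 1 / (8 * c) ≤ lam * 2 ^ p.2 / 2 ^ (p.1 + 2) := by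
    have hk := mem_range.1 (mem_product.1 hp).1
    have : (2 : ℝ) ^ (p.1 + 2) ≤ 2 ^ K * 2 :=
      (pow_le_pow_right₀ one_le_two (by omega)).trans_eq (pow_succ 2 K)
    calc 1 / (8 * c) ≤ 1 / 2 ^ (p.1 + 2) :=
          one_div_le_one_div_of_le (by positivity) (by linarith)
      _ ≤ lam * 2 ^ p.2 / 2 ^ (p.1 + 2) := by
          gcongr; exact one_le_mul_of_one_le_of_one_le hlam (one_le_pow₀ one_le_two)
  refine hd.sum_le_nine_mul (k := p.1) hscale (by positivity) x g T _ fun i hi => ?_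
  obtain ⟨hbig, rfl⟩ := mem_filter.1 hi
  exact ⟨(hg i (mem_filter.1 hbig).2).1, (hfib i hbig).2.1, (hfib i hbig).2.2, (hfib i hbig).1⟩

end

theorem Set.Nonempty.exists_mem_min_one_ciSup_div_mul_lt {α : Type*} {Ψ : Set α} (hΨ : Ψ.Nonempty)
    {a D : α → ℝ} (hD : ∀ g ∈ Ψ, 0 < D g) (ha : ∀ g ∈ Ψ, a g ≤ D g) :
    ∃ g ∈ Ψ, 0 < min 1 (⨆ g : Ψ, a g / D g) → min 1 (⨆ g : Ψ, a g / D g) * D g < 2 * a g := by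
  by_cases hpos : 0 < min 1 (⨆ g : Ψ, a g / D g)
  · have : Nonempty Ψ := hΨ.to_subtype
    have hbdd : BddAbove (Set.range fun g : Ψ => a g / D g) :=
      ⟨1, by rintro _ ⟨g, rfl⟩; exact div_le_one_of_le₀ (ha g g.2) (hD g g.2).le⟩
    obtain ⟨⟨g, hg⟩, hlt⟩ :=
      exists_lt_of_lt_ciSup ((half_lt_self hpos).trans_le (min_le_right _ _))
    refine ⟨g, hg, fun _ => ?_⟩
    rw [lt_div_iff₀ (hD g hg)] at hlt
    linarith
  · exact ⟨hΨ.some, hΨ.some_mem, fun h => absurd h hpos⟩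

theorem Finset.sum_filter_not_lt_le_card_mul {ι : Type*} (s : Finset ι) (f : ι → ℝ) {a : ℝ}
    (ha : 0 ≤ a) : ∑ i ∈ s with ¬ a < f i, f i ≤ #s * a :=
  calc _ ≤ #{i ∈ s | ¬ a < f i} • a :=
        sum_le_card_nsmul _ _ _ fun i hi => not_lt.1 (mem_filter.1 hi).2
    _ ≤ #s * a := by
      rw [nsmul_eq_mul]; exact mul_le_mul_of_nonneg_right (by exact_mod_cast card_filter_le _ _) ha

theorem exists_lt_two_pow_le_two_mul {y : ℝ} (hy : 1 ≤ y) : ∃ K : ℕ, y < 2 ^ K ∧ 2 ^ K ≤ 2 * y := by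
  obtain ⟨K, h1, h2⟩ := exists_nat_pow_near (by linarith : 1 ≤ 2 * y) one_lt_two
  exact ⟨K, by rw [pow_succ] at h2; linarith, h1⟩

theorem Fin.sum_Iio_le_of_le_one {n : ℕ} {f : Fin n → ℝ} (hf : ∀ t, f t ≤ 1) (i : Fin n) :
    ∑ t ∈ Iio i, f t ≤ n :=
  calc ∑ t ∈ Iio i, f t ≤ #(Iio i) • (1 : ℝ) := sum_le_card_nsmul _ _ _ fun t _ => hf t
    _ ≤ n := by rw [Fin.card_Iio, nsmul_one]; exact_mod_cast i.is_lt.le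

theorem self_normalized_sum_le_general {X : Type*}
    (Ψ : Set (X → ℝ)) (hΨne : Ψ.Nonempty) (hΨbdd : ∀ g ∈ Ψ, ∀ x, |g x| ≤ 1)
    (lam : ℝ) (hlam : 1 < lam) (n : ℕ) (hn : 1 ≤ n) (x : Fin n → X)
    (d : ℕ) (hd : EluderDimLE Ψ (1 / (8 * lam * n)) d) :
    ∑ i : Fin n,
        min 1 (⨆ g : Ψ, |(g : X → ℝ) (x i)| /
          (lam + ∑ t ∈ Finset.Iio i, |(g : X → ℝ) (x t)|)) ≤
      12 * (Real.logb 2 (4 * lam * n)) ^ 2 * d + lam⁻¹ := by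
  set T : Fin n → ℝ := fun i => min 1 (⨆ g : Ψ, |(g : X → ℝ) (x i)| /
    (lam + ∑ t ∈ Iio i, |(g : X → ℝ) (x t)|))
  have hn' : (1 : ℝ) ≤ n := by exact_mod_cast hn
  have hS0 (g : X → ℝ) (i : Fin n) : 0 ≤ ∑ t ∈ Iio i, |g (x t)| :=
    sum_nonneg fun _ _ => abs_nonneg _
  obtain ⟨K, hK, hK'⟩ := exists_lt_two_pow_le_two_mul (one_le_mul_of_one_le_of_one_le hlam.le hn')
  have hwit (i : Fin n) :
      ∃ g ∈ Ψ, 0 < T i → T i * (lam + ∑ t ∈ Iio i, |g (x t)|) < 2 * |g (x i)| :=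
    hΨne.exists_mem_min_one_ciSup_div_mul_lt (a := fun g => |g (x i)|)
      (D := fun g => lam + ∑ t ∈ Iio i, |g (x t)|) (fun g _ => by linarith [hS0 g i])
      fun g hg => by linarith [hΨbdd g hg (x i), hS0 g i]
  choose g hgΨ hg using hwit
  have hbig := EluderDimLE.sum_filter_inv_lt_le (by simpa only [mul_assoc] using hd) hlam.le hK
    hK' x g T fun i hi => ⟨hgΨ i, min_le_left _ _, by
      rw [pow_succ]
      nlinarith [Fin.sum_Iio_le_of_le_one (fun t => hΨbdd _ (hgΨ i) (x t)) i,
        mul_nonneg (sub_nonneg.2 hlam.le) (sub_nonneg.2 hn')],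
      hg i (lt_trans (by positivity) hi)⟩
  have hsmall : ∑ i with ¬ (lam * n)⁻¹ < T i, T i ≤ lam⁻¹ :=
    (sum_filter_not_lt_le_card_mul _ _ (by positivity)).trans_eq (by rw [card_univ, Fintype.card_fin]; field_simp)
  have hKL : (K + 1 : ℝ) ≤ Real.logb 2 (4 * lam * n) := by
    rw [Real.le_logb_iff_rpow_le one_lt_two (by positivity),
      show (K + 1 : ℝ) = ((K + 1 : ℕ) : ℝ) by push_cast; ring, Real.rpow_natCast, pow_succ]
    linarith
  calc ∑ i, T i = ∑ i with (lam * n)⁻¹ < T i, T i + ∑ i with ¬ (lam * n)⁻¹ < T i, T i :=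
        (sum_filter_add_sum_filter_not _ _ _).symm
    _ ≤ 9 * K * (K + 1) * d + lam⁻¹ := add_le_add hbig hsmall
    _ ≤ 12 * (Real.logb 2 (4 * lam * n)) ^ 2 * d + lam⁻¹ := by
        gcongr ?_ * _ + _
        nlinarith

/-- self-normalized sum bound via the ℓ1-Eluder dimension. -/
theorem self_normalized_sum_le {X : Type*} [Nonempty X]
    (Ψ : Set (X → ℝ)) (hΨne : Ψ.Nonempty) (hΨbdd : ∀ g ∈ Ψ, ∀ x, |g x| ≤ 1)
    (lam : ℝ) (hlam : 1 < lam) (n : ℕ) (hn : 1 ≤ n) (x : Fin n → X)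
    (d : ℕ) (hd : EluderDimLE Ψ (1 / (8 * lam * n)) d) :
    ∑ i : Fin n,
        min 1 (⨆ g : Ψ, |(g : X → ℝ) (x i)| /
          (lam + ∑ t ∈ Finset.Iio i, |(g : X → ℝ) (x t)|)) ≤
      12 * (Real.logb 2 (4 * lam * n)) ^ 2 * d + lam⁻¹ :=
  self_normalized_sum_le_general Ψ hΨne hΨbdd lam hlam n hn x d hd
end

section
/- Let X be a nonempty set and Ψ a nonempty set of functions g : X → ℝ with |g(x)| ≤ 1 for all g ∈ Ψ and x ∈ X. Let λ > 1, K ≥ 1, H ≥ 1, and points x_h^k ∈ X for k ∈ {1,…,K}, h ∈ {1,…,H}, and suppose d ∈ ℕ is such that the ℓ1-Eluder dimension of Ψ at scale 1/(8λKH) is at most d. Then the number of indices k ∈ {1,…,K} satisfying sup_{g∈Ψ} (λ + ∑_{k'=1}^{k} ∑_{h=1}^{H} |g(x_h^{k'})|) / (λ + ∑_{k'=1}^{k−1} ∑_{h=1}^{H} |g(x_h^{k'})|) > 4 is at most 13·(log₂(4λKH))²·d. -/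
/-!
For each bad episode `k` pick a witness `g_k ∈ Ψ`; badness says that the mass `D_k` of `g_k` on
episode `k` exceeds `3 (λ + P_k)`, where `P_k` is its mass on the earlier episodes. With
`N = ⌈log₂(4λKH)⌉`, sort the bad episodes into `N` buckets by `λ + P_k ∈ [a, 2a)`, `a = λ 2^i`.
Points where `|g_k|` is at most `2^-N` carry mass at most `λ`, so a bad episode of bucket `i`
contains an inclusion-minimal set of heavier points of `g_k`-mass at least `2a`; each selected
point then sees `g_k`-mass below `4a` on the selected points before it (less than `2a` from
earlier episodes, less than `2a` from its own). Splitting the selected points into `N` dyadic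
levels of `|g_k|`, a greedy colouring cuts each level `(ε, 2ε]` into `⌊4a/ε⌋ + 1` sequences that are
`ε`-independent, hence of length at most `d`. So the selected mass of a bucket is at most
`N (8a + 1) d`, while it is at least `2a` per bad episode: each bucket holds at most `5 N d` bad
episodes, and `5 N² ≤ 13 log₂(4λKH)²`.
-/

open Finset

theorem Finset.exists_subset_le_sum_and_sum_erase_lt {α M : Type*} [DecidableEq α]
    [AddCommMonoid M] [LinearOrder M] (s : Finset α) (f : α → M) {c : M}
    (h : c ≤ ∑ a ∈ s, f a) :
    ∃ t ⊆ s, c ≤ ∑ a ∈ t, f a ∧ ∀ a ∈ t, ∑ b ∈ t.erase a, f b < c := by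
  obtain ⟨t, ht, hmin⟩ := (s.powerset.filter (c ≤ ∑ a ∈ ·, f a)).exists_min_image card
    ⟨s, by simp [h]⟩
  simp only [mem_filter, mem_powerset] at ht hmin
  refine ⟨t, ht.1, ht.2, fun a ha => not_le.mp fun hle => ?_⟩
  have := hmin (t.erase a) ⟨(erase_subset a t).trans ht.1, hle⟩
  exact (card_erase_lt_of_mem ha).not_ge this

theorem Finset.exists_coloring_sum_lt {ι M : Type*} [LinearOrder ι] [AddCommMonoid M]
    [LinearOrder M] [IsOrderedCancelAddMonoid M] (F : Finset ι) (w : ι → ι → M) (n : ℕ) (b : M)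
    (h : ∀ i ∈ F, ∑ j ∈ F with j < i, w i j < n • b) :
    ∃ c : ι → ℕ, ∀ i ∈ F, c i < n ∧ ∑ j ∈ F with j < i ∧ c j = c i, w i j < b := by
  classical
  induction F using Finset.induction_on_max with
  | empty => exact ⟨fun _ => 0, by simp⟩
  | insert a s ha ih =>
    have hle : ∀ i ∈ insert a s, i ≤ a := fun i hi =>
      (mem_insert.mp hi).elim le_of_eq fun hi => (ha i hi).le
    have hpast : ∀ i ∈ insert a s, (insert a s).filter (· < i) = s.filter (· < i) := fun i hi => by
      rw [filter_insert, if_neg (hle i hi).not_gt]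
    obtain ⟨c, hc⟩ := ih fun i hi => hpast i (mem_insert_of_mem hi) ▸ h i (mem_insert_of_mem hi)
    have ha' := mem_insert_self a s
    obtain ⟨t, ht, hta⟩ := exists_sum_fiber_lt_of_maps_to_of_sum_lt_nsmul
      (t := range n) (f := c) (w := w a) (fun j hj => mem_range.mpr (hc j hj).1)
      (by simpa [hpast a ha', filter_true_of_mem ha] using h a ha')
    have hcolor : ∀ i ∈ insert a s,
        (insert a s).filter (fun j => j < i ∧ Function.update c a t j = Function.update c a t i) =
          s.filter (fun j => j < i ∧ c j = Function.update c a t i) := fun i hi => by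
      rw [filter_insert, if_neg fun h => (hle i hi).not_gt h.1]
      exact filter_congr fun j hj => by rw [Function.update_of_ne (ha j hj).ne]
    refine ⟨Function.update c a t, fun i hi => ?_⟩
    rw [hcolor i hi]
    rcases mem_insert.mp hi with rfl | hi
    · rw [Function.update_self, filter_congr fun j hj => and_iff_right (ha j hj)]
      exact ⟨mem_range.mp ht, hta⟩
    · rw [Function.update_of_ne (ha i hi).ne]
      exact hc i hi

theorem Finset.map_Iio_orderEmbOfFin {ι : Type*} [LinearOrder ι] (s : Finset ι)
    (i : Fin #s) :
    (Iio i).map (s.orderEmbOfFin rfl).toEmbedding = s.filter (· < s.orderEmbOfFin rfl i) := by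
  ext z
  simp only [mem_map, mem_Iio, mem_filter, RelEmbedding.coe_toEmbedding]
  constructor
  · rintro ⟨j, hj, rfl⟩
    exact ⟨orderEmbOfFin_mem s rfl j, (s.orderEmbOfFin rfl).lt_iff_lt.mpr hj⟩
  · rintro ⟨hz, hzi⟩
    obtain ⟨j, rfl⟩ : z ∈ Set.range (s.orderEmbOfFin rfl) := by simpa using hz
    exact ⟨j, (s.orderEmbOfFin rfl).lt_iff_lt.mp hzi, rfl⟩

theorem Finset.sum_le_sum_filter_lt_add_card_mul {α : Type*} (s : Finset α) (v : α → ℝ)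
    {θ : ℝ} (hθ : 0 ≤ θ) : ∑ a ∈ s, v a ≤ ∑ a ∈ s with θ < v a, v a + #s * θ := by
  rw [← sum_filter_add_sum_filter_not s (θ < v ·)]
  gcongr
  calc ∑ a ∈ s with ¬θ < v a, v a ≤ #(s.filter (¬θ < v ·)) * θ := by
        simpa using sum_le_card_nsmul _ _ θ fun a ha => not_lt.mp (mem_filter.mp ha).2
    _ ≤ #s * θ := by gcongr; exact filter_subset _ _

theorem exists_lt_two_pow_le_lt_two_pow_succ {y : ℝ} {N : ℕ} (hy : 1 ≤ y) (hyN : y < 2 ^ N) :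
    ∃ j < N, 2 ^ j ≤ y ∧ y < 2 ^ (j + 1) := by
  obtain ⟨j, hj, hj'⟩ := exists_nat_pow_near hy one_lt_two
  exact ⟨j, (pow_lt_pow_iff_right₀ one_lt_two).mp (hj.trans_lt hyN), hj, hj'⟩

theorem Finset.sum_le_mul_of_sum_dyadic_le {α : Type*} (s : Finset α) (v : α → ℝ) (N : ℕ)
    (M : ℝ) (hv : ∀ a ∈ s, (2 ^ N)⁻¹ < v a ∧ v a ≤ 1)
    (hM : ∀ j < N, ∑ a ∈ s with (2 ^ (j + 1))⁻¹ < v a ∧ v a ≤ (2 ^ j)⁻¹, v a ≤ M) :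
    ∑ a ∈ s, v a ≤ N * M := by
  have hpos : ∀ a ∈ s, 0 < v a := fun a ha =>
    (by positivity : (0 : ℝ) < (2 ^ N)⁻¹).trans (hv a ha).1
  have hlevel : ∀ a ∈ s, ∃ j < N, (2 ^ (j + 1))⁻¹ < v a ∧ v a ≤ (2 ^ j)⁻¹ := fun a ha => by
    obtain ⟨j, hjN, hj, hj'⟩ := exists_lt_two_pow_le_lt_two_pow_succ
      ((one_le_inv₀ (hpos a ha)).mpr (hv a ha).2) (inv_lt_of_inv_lt₀ (by positivity) (hv a ha).1)
    exact ⟨j, hjN, inv_lt_of_inv_lt₀ (hpos a ha) hj', le_inv_of_le_inv₀ (by positivity) hj⟩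
  choose! lvl hlvlN hlvl using hlevel
  calc ∑ a ∈ s, v a = ∑ j ∈ range N, ∑ a ∈ s with lvl a = j, v a :=
        (sum_fiberwise_of_maps_to (fun a ha => mem_range.mpr (hlvlN a ha)) v).symm
    _ ≤ ∑ _j ∈ range N, M := sum_le_sum fun j hj => by
        refine le_trans (sum_le_sum_of_subset_of_nonneg ?_ ?_) (hM j (mem_range.mp hj))
        · intro a ha
          obtain ⟨has, rfl⟩ := mem_filter.mp ha
          exact mem_filter.mpr ⟨has, hlvl a has⟩
        · exact fun a ha _ => (hpos a (mem_filter.mp ha).1).le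
    _ = N * M := by simp

theorem Finset.sum_filter_fst_lex {α β M : Type*} [Fintype α] [Fintype β] [AddCommMonoid M]
    (p : α → Prop) [DecidablePred p] (F : α → β → M) :
    ∑ q : α ×ₗ β with p (ofLex q).1, F (ofLex q).1 (ofLex q).2 = ∑ a with p a, ∑ b, F a b := by
  rw [sum_filter, sum_filter, ← Fintype.sum_equiv toLex (fun z => if p z.1 then F z.1 z.2 else 0)
    _ (fun _ => rfl), Fintype.sum_prod_type]
  simp [sum_ite_irrel]

theorem Real.exists_lt_of_lt_iSup_of_nonneg {ι : Type*} {f : ι → ℝ} {b : ℝ} (hb : 0 ≤ b)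
    (h : b < ⨆ i, f i) : ∃ i, b < f i := by
  cases isEmpty_or_nonempty ι
  · rw [Real.iSup_of_isEmpty] at h
    exact absurd h hb.not_gt
  · exact exists_lt_of_lt_ciSup h

theorem two_pow_ceil_logb_mem {t : ℝ} (ht : 1 ≤ t) :
    t ≤ 2 ^ ⌈Real.logb 2 t⌉₊ ∧ (2 : ℝ) ^ ⌈Real.logb 2 t⌉₊ < 2 * t := by
  have hpow : 2 ^ Real.logb 2 t = t := Real.rpow_logb two_pos (by norm_num) (by linarith)
  rw [← Real.rpow_natCast]
  constructor
  · calc t = 2 ^ Real.logb 2 t := hpow.symm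
      _ ≤ _ := Real.rpow_le_rpow_of_exponent_le one_le_two (Nat.le_ceil _)
  · calc (2 : ℝ) ^ (⌈Real.logb 2 t⌉₊ : ℝ) < 2 ^ (Real.logb 2 t + 1) :=
          Real.rpow_lt_rpow_of_exponent_lt one_lt_two
            (Nat.ceil_lt_add_one (Real.logb_nonneg one_lt_two ht))
      _ = 2 * t := by rw [Real.rpow_add_one two_ne_zero, hpow, mul_comm]

section Eluder

variable {X ι : Type*} [LinearOrder ι] {Ψ : Set (X → ℝ)} {ε₀ ε : ℝ} {d : ℕ}

theorem EluderDimLE.mono (hd : EluderDimLE Ψ ε₀ d) (h : ε₀ ≤ ε) : EluderDimLE Ψ ε d :=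
  fun ε' hε' => hd ε' (h.trans hε')

theorem isEpsIndep_comp_orderEmbOfFin (s : Finset ι) (y : ι → X) (g : ι → X → ℝ)
    (hg : ∀ i ∈ s, g i ∈ Ψ) (hpast : ∀ i ∈ s, ∑ j ∈ s with j < i, |g i (y j)| ≤ ε)
    (hbig : ∀ i ∈ s, ε < |g i (y i)|) :
    IsEpsIndep Ψ ε (y ∘ s.orderEmbOfFin rfl) := fun i => by
  have hi := orderEmbOfFin_mem s rfl i
  refine ⟨g (s.orderEmbOfFin rfl i), hg _ hi, ?_, hbig _ hi⟩
  simpa [← s.map_Iio_orderEmbOfFin, sum_map] using hpast _ hi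

theorem EluderDimLE.card_le (hd : EluderDimLE Ψ ε₀ d) (hε : ε₀ ≤ ε) (s : Finset ι)
    (y : ι → X) (g : ι → X → ℝ) (hg : ∀ i ∈ s, g i ∈ Ψ)
    (hpast : ∀ i ∈ s, ∑ j ∈ s with j < i, |g i (y j)| ≤ ε)
    (hbig : ∀ i ∈ s, ε < |g i (y i)|) : #s ≤ d :=
  hd ε hε _ _ (isEpsIndep_comp_orderEmbOfFin s y g hg hpast hbig)

theorem EluderDimLE.card_mul_le (hd : EluderDimLE Ψ ε₀ d) (hε₀ : ε₀ ≤ ε) (hε : 0 < ε) {C : ℝ}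
    (hC : 0 ≤ C) (F : Finset ι) (y : ι → X) (g : ι → X → ℝ) (hg : ∀ i ∈ F, g i ∈ Ψ)
    (hpast : ∀ i ∈ F, ∑ j ∈ F with j < i, |g i (y j)| ≤ C)
    (hbig : ∀ i ∈ F, ε < |g i (y i)|) : (#F : ℝ) * ε ≤ (C + ε) * d := by
  -- a greedy colouring with `⌊C / ε⌋₊ + 1` colours cuts `F` into `ε`-independent sequences
  set n := ⌊C / ε⌋₊ + 1
  have hCn : C < n • ε := by
    rw [nsmul_eq_mul, ← div_lt_iff₀ hε]
    exact_mod_cast Nat.lt_floor_add_one _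
  obtain ⟨c, hc⟩ := F.exists_coloring_sum_lt (fun i j => |g i (y j)|) n ε
    fun i hi => (hpast i hi).trans_lt hCn
  have hclass : ∀ t, #(F.filter (c · = t)) ≤ d := fun t => by
    refine hd.card_le hε₀ _ y g (fun i hi => hg i (mem_filter.mp hi).1) (fun i hi => ?_)
      (fun i hi => hbig i (mem_filter.mp hi).1)
    obtain ⟨hiF, rfl⟩ := mem_filter.mp hi
    rw [filter_filter]
    simp_rw [and_comm (a := c _ = c i)]
    exact (hc i hiF).2.le
  have hcard : #F ≤ n * d := by
    rw [card_eq_sum_card_fiberwise (fun i hi => mem_range.mpr (hc i hi).1)]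
    simpa using sum_le_sum fun t (_ : t ∈ range n) => hclass t
  calc (#F : ℝ) * ε ≤ n * d * ε := by gcongr; exact_mod_cast hcard
    _ = (⌊C / ε⌋₊ * ε + ε) * d := by push_cast [n]; ring
    _ ≤ (C + ε) * d := by gcongr; exact (le_div_iff₀ hε).mp (Nat.floor_le (by positivity))

theorem EluderDimLE.sum_abs_le {N : ℕ} (hd : EluderDimLE Ψ (2 ^ N)⁻¹ d)
    (hΨ : ∀ g ∈ Ψ, ∀ x, |g x| ≤ 1) {C : ℝ} (hC : 0 ≤ C) (S : Finset ι) (y : ι → X)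
    (g : ι → X → ℝ) (hg : ∀ i ∈ S, g i ∈ Ψ)
    (hpast : ∀ i ∈ S, ∑ j ∈ S with j < i, |g i (y j)| ≤ C)
    (hheavy : ∀ i ∈ S, (2 ^ N)⁻¹ < |g i (y i)|) :
    ∑ i ∈ S, |g i (y i)| ≤ N * ((2 * C + 1) * d) := by
  refine S.sum_le_mul_of_sum_dyadic_le _ N _
    (fun i hi => ⟨hheavy i hi, hΨ _ (hg i hi) _⟩) fun j hj => ?_
  set F := S.filter fun i => (2 ^ (j + 1))⁻¹ < |g i (y i)| ∧ |g i (y i)| ≤ (2 ^ j)⁻¹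
  set ε : ℝ := (2 ^ (j + 1))⁻¹ with hε_def
  have hε₀ : (2 ^ N)⁻¹ ≤ ε := inv_anti₀ (by positivity) (pow_le_pow_right₀ one_le_two hj)
  have hε2 : 2 * ε = (2 ^ j)⁻¹ := by
    rw [hε_def, pow_succ, mul_inv, mul_comm, inv_mul_cancel_right₀ two_ne_zero]
  have hε : 2 * ε ≤ 1 := hε2 ▸ inv_le_one_of_one_le₀ (one_le_pow₀ one_le_two)
  have hcard := hd.card_mul_le hε₀ (by positivity) hC F y g
    (fun i hi => hg i (mem_filter.mp hi).1)
    (fun i hi => (sum_le_sum_of_subset_of_nonneg (filter_subset_filter _ (filter_subset _ _))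
      (fun _ _ _ => abs_nonneg _)).trans (hpast i (mem_filter.mp hi).1))
    (fun i hi => (mem_filter.mp hi).2.1)
  calc ∑ i ∈ F, |g i (y i)| ≤ ∑ _i ∈ F, 2 * ε :=
        sum_le_sum fun i hi => (mem_filter.mp hi).2.2.trans_eq hε2.symm
    _ = 2 * (#F * ε) := by simp; ring
    _ ≤ 2 * ((C + ε) * d) := by gcongr
    _ = (2 * C + 2 * ε) * d := by ring
    _ ≤ (2 * C + 1) * d := by gcongr

end Eluder

section Episodes

variable {X ι κ : Type*} [LinearOrder ι] [Fintype ι] [LinearOrder κ]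
  (e : ι → κ) (y : ι → X)

-- Points `y q` are indexed by a linear order `ι` and grouped into episodes by `e : ι → κ`
-- (monotone in the lemmas below); the theorem takes `ι = Fin K ×ₗ Fin H`.
def pastMass (f : X → ℝ) (k : κ) : ℝ := ∑ q with e q < k, |f (y q)|

def episodeMass (f : X → ℝ) (k : κ) : ℝ := ∑ q with e q = k, |f (y q)|

variable {e} {Ψ : Set (X → ℝ)} {N d : ℕ}

theorem sum_filter_lt_le_pastMass_add (he : Monotone e) (B : Finset κ) (T : κ → Finset ι)
    (hT : ∀ k ∈ B, ∀ q ∈ T k, e q = k) {k : κ} (hk : k ∈ B) {p : ι} (hp : p ∈ T k)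
    (f : X → ℝ) :
    ∑ q ∈ B.biUnion T with q < p, |f (y q)| ≤
      pastMass e y f k + ∑ q ∈ (T k).erase p, |f (y q)| := by
  rw [← sum_filter_add_sum_filter_not _ (e · < k)]
  refine add_le_add ?_ ?_
  · exact sum_le_sum_of_subset_of_nonneg (fun q hq => by simp_all) fun _ _ _ => abs_nonneg _
  · refine sum_le_sum_of_subset_of_nonneg (fun q hq => ?_) fun _ _ _ => abs_nonneg _
    simp only [mem_filter, mem_biUnion, not_lt] at hq
    obtain ⟨⟨⟨k', hk', hqk'⟩, hqp⟩, hkq⟩ := hq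
    have hek : e q = k := le_antisymm (hT k hk p hp ▸ he hqp.le) hkq
    rw [hT k' hk' q hqk'] at hek
    exact mem_erase.mpr ⟨hqp.ne, hek ▸ hqk'⟩

theorem card_mul_le_of_heavy_mass_ge (hd : EluderDimLE Ψ (2 ^ N)⁻¹ d)
    (hΨ : ∀ g ∈ Ψ, ∀ x, |g x| ≤ 1) (he : Monotone e) {a : ℝ} (ha : 0 ≤ a) (B : Finset κ)
    (g : κ → X → ℝ) (hg : ∀ k ∈ B, g k ∈ Ψ) (hpast : ∀ k ∈ B, pastMass e y (g k) k ≤ 2 * a)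
    (hheavy : ∀ k ∈ B, 2 * a ≤ ∑ q with e q = k ∧ (2 ^ N)⁻¹ < |g k (y q)|, |g k (y q)|) :
    #B * (2 * a) ≤ N * ((8 * a + 1) * d) := by
  classical
  -- by minimality of `T k`, a point of `T k` sees `g k`-mass below `2 * a` in the rest of `T k`
  choose! T hTsub hTmass hTmin using fun k hk =>
    exists_subset_le_sum_and_sum_erase_lt _ (fun q => |g k (y q)|) (hheavy k hk)
  have hTe : ∀ k ∈ B, ∀ q ∈ T k, e q = k ∧ (2 ^ N)⁻¹ < |g k (y q)| := fun k hk q hq =>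
    (mem_filter.mp (hTsub k hk hq)).2
  have hdisj : Set.PairwiseDisjoint B T := fun k hk k' hk' hkk' =>
    disjoint_left.mpr fun q hq hq' => hkk' ((hTe k hk q hq).1.symm.trans (hTe k' hk' q hq').1)
  have hsum : ∑ q ∈ B.biUnion T, |g (e q) (y q)| = ∑ k ∈ B, ∑ q ∈ T k, |g k (y q)| := by
    rw [sum_biUnion hdisj]
    exact sum_congr rfl fun k hk => sum_congr rfl fun q hq => by rw [(hTe k hk q hq).1]
  have hmem : ∀ q ∈ B.biUnion T, ∃ k ∈ B, q ∈ T k ∧ e q = k := fun q hq => by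
    obtain ⟨k, hk, hq⟩ := mem_biUnion.mp hq
    exact ⟨k, hk, hq, (hTe k hk q hq).1⟩
  have hupper := hd.sum_abs_le hΨ (C := 4 * a) (by positivity) (B.biUnion T) y (fun q => g (e q))
    (fun q hq => by obtain ⟨k, hk, -, rfl⟩ := hmem q hq; exact hg _ hk)
    (fun q hq => by
      obtain ⟨k, hk, hqk, rfl⟩ := hmem q hq
      linarith [sum_filter_lt_le_pastMass_add y he B T (fun k hk q hq => (hTe k hk q hq).1) hk
        hqk (g (e q)), hpast _ hk, hTmin _ hk q hqk])
    (fun q hq => by obtain ⟨k, hk, hqk, rfl⟩ := hmem q hq; exact (hTe _ hk q hqk).2)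
  calc #B * (2 * a) = ∑ _k ∈ B, 2 * a := by simp
    _ ≤ ∑ k ∈ B, ∑ q ∈ T k, |g k (y q)| := sum_le_sum hTmass
    _ ≤ N * ((8 * a + 1) * d) := by
      rw [← hsum]; exact hupper.trans_eq (by ring)

theorem card_le_of_three_mul_lt_episodeMass_of_mem_Ico (hd : EluderDimLE Ψ (2 ^ N)⁻¹ d)
    (hΨ : ∀ g ∈ Ψ, ∀ x, |g x| ≤ 1) (he : Monotone e) {lam a : ℝ} (hlam : 1 / 2 ≤ lam)
    (hlight : Fintype.card ι * (2 ^ N)⁻¹ ≤ lam) (ha : lam ≤ a) (B : Finset κ)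
    (g : κ → X → ℝ) (hg : ∀ k ∈ B, g k ∈ Ψ)
    (hbad : ∀ k ∈ B, 3 * (lam + pastMass e y (g k) k) < episodeMass e y (g k) k)
    (hbucket : ∀ k ∈ B, lam + pastMass e y (g k) k ∈ Set.Ico a (2 * a)) :
    (#B : ℝ) ≤ 5 * N * d := by
  have hheavy : ∀ k ∈ B,
      2 * a ≤ ∑ q with e q = k ∧ (2 ^ N)⁻¹ < |g k (y q)|, |g k (y q)| := fun k hk => by
    have hsplit := (univ.filter (e · = k)).sum_le_sum_filter_lt_add_card_mul
      (fun q => |g k (y q)|) (θ := (2 ^ N)⁻¹) (by positivity)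
    rw [filter_filter] at hsplit
    have hlight_k : (#(univ.filter (e · = k)) : ℝ) * (2 ^ N)⁻¹ ≤ lam :=
      (mul_le_mul_of_nonneg_right (by exact_mod_cast card_le_univ _) (by positivity)).trans hlight
    have hD : episodeMass e y (g k) k = ∑ q with e q = k, |g k (y q)| := rfl
    linarith [hbad k hk, (hbucket k hk).1]
  have hmass := card_mul_le_of_heavy_mass_ge y hd hΨ he (by linarith) B g hg
    (fun k hk => by linarith [(hbucket k hk).2]) hheavy
  rw [← mul_le_mul_iff_of_pos_right (by linarith : (0 : ℝ) < 2 * a)]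
  calc _ ≤ _ := hmass
    _ ≤ N * ((10 * a) * d) := by gcongr; linarith
    _ = 5 * N * d * (2 * a) := by ring

theorem card_le_of_three_mul_lt_episodeMass (hd : EluderDimLE Ψ (2 ^ N)⁻¹ d)
    (hΨ : ∀ g ∈ Ψ, ∀ x, |g x| ≤ 1) (he : Monotone e) {lam : ℝ} (hlam : 1 / 2 ≤ lam)
    (hN : lam + Fintype.card ι < lam * 2 ^ N) (B : Finset κ)
    (hbad : ∀ k ∈ B, ∃ g ∈ Ψ, 3 * (lam + pastMass e y g k) < episodeMass e y g k) :
    (#B : ℝ) ≤ 5 * N ^ 2 * d := by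
  choose! g hg hbad using hbad
  have hlam0 : 0 < lam := by linarith
  have hbucket : ∀ k ∈ B, ∃ i < N, lam + pastMass e y (g k) k ∈ Set.Ico (lam * 2 ^ i)
      (2 * (lam * 2 ^ i)) := fun k hk => by
    have hP : 0 ≤ pastMass e y (g k) k := sum_nonneg fun _ _ => abs_nonneg _
    have hP' : pastMass e y (g k) k ≤ Fintype.card ι :=
      (sum_le_card_nsmul _ _ 1 fun q _ => hΨ _ (hg k hk) _).trans (by simpa using card_le_univ _)
    obtain ⟨i, hiN, hi, hi'⟩ := exists_lt_two_pow_le_lt_two_pow_succ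
      (y := (lam + pastMass e y (g k) k) / lam) (by rw [le_div_iff₀ hlam0]; linarith)
      (by rw [div_lt_iff₀ hlam0]; linarith)
    rw [le_div_iff₀ hlam0] at hi
    rw [div_lt_iff₀ hlam0, pow_succ] at hi'
    exact ⟨i, hiN, by linarith, by linarith⟩
  choose! i hiN hi using hbucket
  have hlight : Fintype.card ι * (2 ^ N)⁻¹ ≤ lam := by
    rw [← div_eq_mul_inv, div_le_iff₀ (by positivity)]
    linarith
  have hcount : ∀ j < N, (#(B.filter (i · = j)) : ℝ) ≤ 5 * N * d := fun j _ =>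
    card_le_of_three_mul_lt_episodeMass_of_mem_Ico y hd hΨ he hlam hlight (a := lam * 2 ^ j)
      (le_mul_of_one_le_right hlam0.le (one_le_pow₀ one_le_two)) _ g
      (fun k hk => hg k (mem_filter.mp hk).1) (fun k hk => hbad k (mem_filter.mp hk).1)
      (fun k hk => by obtain ⟨hkB, rfl⟩ := mem_filter.mp hk; exact hi k hkB)
  calc (#B : ℝ) = ∑ j ∈ range N, (#(B.filter (i · = j)) : ℝ) := by
        rw [card_eq_sum_card_fiberwise fun k hk => mem_range.mpr (hiN k hk)]; push_cast; rfl
    _ ≤ ∑ _j ∈ range N, (5 * N * d : ℝ) := sum_le_sum fun j hj => hcount j (mem_range.mp hj)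
    _ = 5 * N ^ 2 * d := by simp; ring

end Episodes

section Lex

variable {X α β : Type*} [LinearOrder α] [Fintype α] [Fintype β] (x : α → β → X) (f : X → ℝ)

theorem pastMass_lex [LocallyFiniteOrderBot α] (k : α) :
    pastMass (fun q : α ×ₗ β => (ofLex q).1) (fun q => x (ofLex q).1 (ofLex q).2) f k =
      ∑ a ∈ Iio k, ∑ b, |f (x a b)| := by
  rw [pastMass, sum_filter_fst_lex (· < k) (fun a b => |f (x a b)|), filter_gt_eq_Iio]

theorem episodeMass_lex (k : α) :
    episodeMass (fun q : α ×ₗ β => (ofLex q).1) (fun q => x (ofLex q).1 (ofLex q).2) f k =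
      ∑ b, |f (x k b)| := by
  rw [episodeMass, sum_filter_fst_lex (· = k) (fun a b => |f (x a b)|), filter_eq',
    if_pos (mem_univ k), sum_singleton]

theorem exists_three_mul_lt_episodeMass_of_four_lt_iSup [LocallyFiniteOrderBot α]
    {Ψ : Set (X → ℝ)} {lam : ℝ} (hlam : 0 < lam) {k : α}
    (h : 4 < ⨆ g : Ψ, (lam + ∑ a ∈ Iic k, ∑ b, |(g : X → ℝ) (x a b)|) /
      (lam + ∑ a ∈ Iio k, ∑ b, |(g : X → ℝ) (x a b)|)) :
    ∃ g ∈ Ψ, 3 * (lam + pastMass (fun q : α ×ₗ β => (ofLex q).1)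
      (fun q => x (ofLex q).1 (ofLex q).2) g k) <
        episodeMass (fun q : α ×ₗ β => (ofLex q).1) (fun q => x (ofLex q).1 (ofLex q).2) g k := by
  obtain ⟨⟨g, hg⟩, hlt⟩ := Real.exists_lt_of_lt_iSup_of_nonneg (by norm_num) h
  have hpos : 0 < lam + ∑ a ∈ Iio k, ∑ b, |g (x a b)| :=
    add_pos_of_pos_of_nonneg hlam (by positivity)
  rw [← sum_Iio_add_eq_sum_Iic, lt_div_iff₀ hpos] at hlt
  refine ⟨g, hg, ?_⟩
  rw [pastMass_lex, episodeMass_lex]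
  linarith

end Lex

theorem card_bad_episodes_le_general {X : Type*}
    (Ψ : Set (X → ℝ)) (hΨbdd : ∀ g ∈ Ψ, ∀ x, |g x| ≤ 1)
    (lam : ℝ) (hlam : 1 < lam) (K H : ℕ) (hK : 1 ≤ K) (hH : 1 ≤ H)
    (x : Fin K → Fin H → X)
    (d : ℕ) (hd : EluderDimLE Ψ (1 / (8 * lam * K * H)) d) :
    (({k : Fin K | 4 <
        ⨆ g : Ψ, (lam + ∑ k' ∈ Finset.Iic k, ∑ h, |(g : X → ℝ) (x k' h)|) /
          (lam + ∑ k' ∈ Finset.Iio k, ∑ h, |(g : X → ℝ) (x k' h)|)}.ncard : ℝ)) ≤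
      13 * (Real.logb 2 (4 * lam * K * H)) ^ 2 * d := by
  classical
  have hKH : (1 : ℝ) ≤ K * H := by exact_mod_cast Nat.one_le_iff_ne_zero.mpr (by positivity)
  obtain ⟨hN, hN'⟩ := two_pow_ceil_logb_mem (t := 4 * lam * K * H) (by nlinarith)
  set L := Real.logb 2 (4 * lam * K * H)
  have hL : 2 ≤ L := by
    rw [Real.le_logb_iff_rpow_le one_lt_two (by positivity)]
    norm_num; nlinarith
  have hscale : 1 / (8 * lam * K * H) ≤ (2 ^ ⌈L⌉₊)⁻¹ := by
    rw [one_div]; exact inv_anti₀ (by positivity) (by linarith)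
  have hsize : lam + Fintype.card (Fin K ×ₗ Fin H) < lam * 2 ^ ⌈L⌉₊ := by
    simp only [Fintype.card_lex, Fintype.card_prod, Fintype.card_fin, Nat.cast_mul]
    nlinarith
  rw [Set.ncard_eq_toFinset_card', Set.toFinset_ofPred]
  calc _ ≤ 5 * (⌈L⌉₊ : ℝ) ^ 2 * d :=
        card_le_of_three_mul_lt_episodeMass _ (hd.mono hscale) hΨbdd Prod.Lex.monotone_fst_ofLex
          (by linarith) hsize _ fun k hk =>
            exists_three_mul_lt_episodeMass_of_four_lt_iSup x (by linarith) (mem_filter.mp hk).2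
    _ ≤ 13 * L ^ 2 * d := mul_le_mul_of_nonneg_right
        (by nlinarith [Nat.ceil_lt_add_one (by linarith : 0 ≤ L)]) d.cast_nonneg

/-- the number of episodes `k` along which the self-normalized ratio
exceeds `4` is at most `13·(log₂(4λKH))²·d`. -/
theorem card_bad_episodes_le {X : Type*} [Nonempty X]
    (Ψ : Set (X → ℝ)) (hΨne : Ψ.Nonempty) (hΨbdd : ∀ g ∈ Ψ, ∀ x, |g x| ≤ 1)
    (lam : ℝ) (hlam : 1 < lam) (K H : ℕ) (hK : 1 ≤ K) (hH : 1 ≤ H)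
    (x : Fin K → Fin H → X)
    (d : ℕ) (hd : EluderDimLE Ψ (1 / (8 * lam * K * H)) d) :
    (({k : Fin K | 4 <
        ⨆ g : Ψ, (lam + ∑ k' ∈ Finset.Iic k, ∑ h, |(g : X → ℝ) (x k' h)|) /
          (lam + ∑ k' ∈ Finset.Iio k, ∑ h, |(g : X → ℝ) (x k' h)|)}.ncard : ℝ)) ≤
      13 * (Real.logb 2 (4 * lam * K * H)) ^ 2 * d :=
  card_bad_episodes_le_general Ψ hΨbdd lam hlam K H hK hH x d hd
end

section
/- Let G > 0, let a be a positive real with a < G/2, let M > 0 with M ≥ G, and set N = ⌈log₂(M/G)⌉. Let C_0, C_1, …, C_N be positive reals such that (i) C_m ≤ 2^m·G + √(a·C_{m+1}) + a for all 0 ≤ m ≤ N−1, and (ii) C_m ≤ M for all 0 ≤ m ≤ N. Then C_0 ≤ 4·G. -/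
/-- Recursion lemma. If `C_m ≤ 2^m·G + √(a·C_{m+1}) + a` for `m < N`
and `C_m ≤ M` for `m ≤ N`, where `N = ⌈log₂(M/G)⌉`, `0 < a < G/2` and `M ≥ G > 0`,
then `C_0 ≤ 4·G`. -/
theorem recursion_bound (G a M : ℝ) (hG : 0 < G) (ha0 : 0 < a) (ha : a < G / 2)
    (hM0 : 0 < M) (hMG : G ≤ M)
    (N : ℕ) (hN : (N : ℤ) = ⌈Real.logb 2 (M / G)⌉)
    (C : ℕ → ℝ) (hCpos : ∀ m ≤ N, 0 < C m)
    (hrec : ∀ m, m + 1 ≤ N → C m ≤ 2 ^ m * G + Real.sqrt (a * C (m + 1)) + a)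
    (hbdd : ∀ m ≤ N, C m ≤ M) :
    C 0 ≤ 4 * G := by
  -- M ≤ 2^N * G
  have hMN : M ≤ 2 ^ N * G := by
    have hx : (1:ℝ) ≤ M / G := (one_le_div hG).mpr hMG
    have hlog : Real.logb 2 (M / G) ≤ (N : ℝ) := by
      have := Int.le_ceil (Real.logb 2 (M / G))
      calc Real.logb 2 (M / G) ≤ ((⌈Real.logb 2 (M / G)⌉ : ℤ) : ℝ) := this
        _ = ((N : ℤ) : ℝ) := by rw [hN]
        _ = (N : ℝ) := by push_cast; ring
    have h2 : M / G ≤ (2:ℝ) ^ (N : ℝ) := by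
      have := Real.rpow_le_rpow_left_iff (x := (2:ℝ)) (by norm_num : (1:ℝ) < 2)
        (y := Real.logb 2 (M / G)) (z := (N : ℝ))
      have heq : (2:ℝ) ^ Real.logb 2 (M / G) = M / G :=
        Real.rpow_logb (by norm_num) (by norm_num) (by positivity)
      calc M / G = (2:ℝ) ^ Real.logb 2 (M / G) := heq.symm
        _ ≤ (2:ℝ) ^ (N : ℝ) := (this.mpr hlog)
    rw [Real.rpow_natCast] at h2
    calc M = (M / G) * G := by field_simp
      _ ≤ 2 ^ N * G := by nlinarith [hG]
  -- main claim by reverse induction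
  have key : ∀ j, j ≤ N → C (N - j) ≤ 4 * 2 ^ (N - j) * G := by
    intro j
    induction j with
    | zero =>
      intro _
      simp only [Nat.sub_zero]
      calc C N ≤ M := hbdd N le_rfl
        _ ≤ 2 ^ N * G := hMN
        _ ≤ 4 * 2 ^ N * G := by nlinarith [pow_pos (by norm_num : (0:ℝ) < 2) N]
    | succ j ih =>
      intro hj
      have hjN : j ≤ N := le_of_lt (Nat.lt_of_succ_le hj)
      have ihj := ih hjN
      set m := N - (j + 1) with hm
      have hm1 : m + 1 = N - j := by omega
      have hm1N : m + 1 ≤ N := by omega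
      have hrecm := hrec m hm1N
      have hCm1 : C (m + 1) ≤ 4 * 2 ^ (m + 1) * G := by rw [hm1]; exact ihj
      have hpow : (0:ℝ) < 2 ^ m := pow_pos (by norm_num) m
      have hsq : a * C (m + 1) ≤ (2 ^ (m + 1) * G) ^ 2 := by
        have hCm1pos : 0 < C (m + 1) := hCpos (m + 1) hm1N
        have h1 : a * C (m + 1) ≤ (G / 2) * (4 * 2 ^ (m + 1) * G) := by
          apply mul_le_mul (le_of_lt ha) hCm1 (le_of_lt hCm1pos) (by linarith)
        have h2 : (G / 2) * (4 * 2 ^ (m + 1) * G) ≤ (2 ^ (m + 1) * G) ^ 2 := by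
          have : (1:ℝ) ≤ 2 ^ m := one_le_pow₀ (by norm_num)
          have hmm : (2:ℝ) ^ (m * 2) = (2 ^ m) ^ 2 := by rw [pow_mul]
          ring_nf
          rw [hmm]
          nlinarith [sq_nonneg G, mul_le_mul_of_nonneg_left this (le_of_lt hpow), mul_nonneg (sq_nonneg G) (mul_nonneg hpow.le (sub_nonneg.mpr this))]
        linarith
      have hsqrt : Real.sqrt (a * C (m + 1)) ≤ 2 ^ (m + 1) * G := by
        have := Real.sqrt_le_sqrt hsq
        rwa [Real.sqrt_sq (by positivity)] at this
      have haG : a ≤ 2 ^ m * G := by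
        have : (1:ℝ) ≤ 2 ^ m := one_le_pow₀ (by norm_num)
        nlinarith
      calc C m ≤ 2 ^ m * G + Real.sqrt (a * C (m + 1)) + a := hrecm
        _ ≤ 2 ^ m * G + 2 ^ (m + 1) * G + 2 ^ m * G := by linarith
        _ = 4 * 2 ^ m * G := by ring
  have := key N le_rfl
  simpa using this
end

section
/- Consider a finite MDP with state space S, action space A, horizon H, true transition kernel P*, reward r, and initial state s₀, and let π be a deterministic nonstationary policy. Let P̂ be any transition kernel on S×A. Then V^π_{0;P*}(s₀) − V^π_{0;P̂}(s₀) ≤ ∑_{h=0}^{H−1} E_{(s,a)∼d^π_h} [ | (P* V^π_{h+1;P̂})(s,a) − (P̂ V^π_{h+1;P̂})(s,a) | ]. (Simulation lemma.) -/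
open Finset

/-- Simulation lemma. -/
theorem simulation_lemma {S A : Type*} [Fintype S] [Fintype A] [DecidableEq S] [DecidableEq A]
    (H : ℕ) (Pstar Phat : S → A → S → ℝ) (r : S → A → ℝ) (s0 : S) (pol : ℕ → S → A)
    (hPstar : ∀ s a, (∀ s', 0 ≤ Pstar s a s') ∧ ∑ s', Pstar s a s' = 1)
    (hPhat : ∀ s a, (∀ s', 0 ≤ Phat s a s') ∧ ∑ s', Phat s a s' = 1)
    -- value functions of `pol` under the true model `P*` and under `P̂`
    (Vstar Vhat : ℕ → S → ℝ)
    (hVstarH : ∀ s, Vstar H s = 0)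
    (hVstarBellman : ∀ h < H, ∀ s,
      Vstar h s = r s (pol h s) + ∑ s', Pstar s (pol h s) s' * Vstar (h + 1) s')
    (hVhatH : ∀ s, Vhat H s = 0)
    (hVhatBellman : ∀ h < H, ∀ s,
      Vhat h s = r s (pol h s) + ∑ s', Phat s (pol h s) s' * Vhat (h + 1) s')
    -- state–action occupancy measures of `pol` under the true model `P*`
    (d : ℕ → S → A → ℝ)
    (hd0 : ∀ s a, d 0 s a = if s = s0 ∧ a = pol 0 s0 then 1 else 0)
    (hdstep : ∀ h s' a', d (h + 1) s' a' =
      ∑ s, ∑ a, d h s a * Pstar s a s' * (if a' = pol (h + 1) s' then 1 else 0)) :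
    Vstar 0 s0 - Vhat 0 s0 ≤
      ∑ h ∈ Finset.range H, ∑ s, ∑ a, d h s a *
        |(∑ s', Pstar s a s' * Vhat (h + 1) s') - (∑ s', Phat s a s' * Vhat (h + 1) s')| := by
  classical
  -- nonnegativity of d
  have hd_nonneg : ∀ h s a, 0 ≤ d h s a := by
    intro h
    induction h with
    | zero =>
      intro s a; rw [hd0]; split <;> norm_num
    | succ n ih =>
      intro s a; rw [hdstep]
      refine Finset.sum_nonneg fun s' _ => Finset.sum_nonneg fun a' _ => ?_
      refine mul_nonneg (mul_nonneg (ih s' a') ((hPstar s' a').1 s)) ?_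
      split <;> norm_num
  -- support of d
  have hd_supp : ∀ h s a, a ≠ pol h s → d h s a = 0 := by
    intro h s a hne
    cases h with
    | zero =>
      rw [hd0, if_neg]
      rintro ⟨rfl, rfl⟩; exact hne rfl
    | succ n =>
      rw [hdstep]
      refine Finset.sum_eq_zero fun s' _ => Finset.sum_eq_zero fun a' _ => ?_
      rw [if_neg hne, mul_zero]
  set f : ℕ → ℝ := fun h => ∑ s, ∑ a, d h s a * (Vstar h s - Vhat h s) with hf
  set g : ℕ → ℝ := fun h => ∑ s, ∑ a, d h s a *
      |(∑ s', Pstar s a s' * Vhat (h + 1) s') - (∑ s', Phat s a s' * Vhat (h + 1) s')| with hg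
  have hf0 : f 0 = Vstar 0 s0 - Vhat 0 s0 := by
    simp only [hf, hd0, ite_and]
    rw [Fintype.sum_eq_single s0]
    · rw [Fintype.sum_eq_single (pol 0 s0)]
      · simp
      · intro b hb; simp [hb]
    · intro b hb
      refine Finset.sum_eq_zero fun a _ => ?_
      simp [hb]
  have hfH : f H = 0 := by
    simp [hf, hVstarH, hVhatH]
  have hstep : ∀ h < H, f h ≤ g h + f (h + 1) := by
    intro h hh
    set W : S → ℝ := fun s' => Vstar (h + 1) s' - Vhat (h + 1) s' with hW
    have claim1 : ∀ s a, d h s a * (Vstar h s - Vhat h s) =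
        d h s a * ((∑ s', Pstar s a s' * Vhat (h + 1) s') -
          (∑ s', Phat s a s' * Vhat (h + 1) s')) +
        ∑ s', d h s a * Pstar s a s' * W s' := by
      intro s a
      by_cases ha : a = pol h s
      · subst ha
        have e1 : (∑ s', d h s (pol h s) * Pstar s (pol h s) s' * W s')
            = d h s (pol h s) * ((∑ s', Pstar s (pol h s) s' * Vstar (h + 1) s') -
              (∑ s', Pstar s (pol h s) s' * Vhat (h + 1) s')) := by
          rw [mul_sub, Finset.mul_sum, Finset.mul_sum, ← Finset.sum_sub_distrib]
          refine Finset.sum_congr rfl fun s' _ => ?_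
          simp only [hW]; ring
        rw [hVstarBellman h hh s, hVhatBellman h hh s, e1]
        ring
      · simp [hd_supp h s a ha]
    have hmarg : ∀ s', (∑ a', d (h + 1) s' a') = ∑ s, ∑ a, d h s a * Pstar s a s' := by
      intro s'
      simp only [hdstep]
      rw [Finset.sum_comm]
      refine Finset.sum_congr rfl fun s _ => ?_
      rw [Finset.sum_comm]
      refine Finset.sum_congr rfl fun a _ => ?_
      simp [mul_ite]
    have hfsucc : f (h + 1) = ∑ s, ∑ a, ∑ s', d h s a * Pstar s a s' * W s' := by
      have h1 : f (h + 1) = ∑ s', (∑ s, ∑ a, d h s a * Pstar s a s') * W s' := by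
        simp only [hf]
        refine Finset.sum_congr rfl fun s' _ => ?_
        rw [← hmarg s', Finset.sum_mul]
      have h2 : ∀ s' : S, (∑ s, ∑ a, d h s a * Pstar s a s') * W s'
          = ∑ s, ∑ a, d h s a * Pstar s a s' * W s' := by
        intro s'
        rw [Finset.sum_mul]
        exact Finset.sum_congr rfl fun s _ => by rw [Finset.sum_mul]
      have h3 : (∑ s, ∑ a, ∑ s', d h s a * Pstar s a s' * W s')
          = ∑ s', ∑ s, ∑ a, d h s a * Pstar s a s' * W s' :=
        (Finset.sum_congr rfl fun s _ => Finset.sum_comm).trans Finset.sum_comm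
      rw [h1, h3]
      exact Finset.sum_congr rfl fun s' _ => h2 s'
    have hfh : f h = (∑ s, ∑ a, d h s a * ((∑ s', Pstar s a s' * Vhat (h + 1) s') -
        (∑ s', Phat s a s' * Vhat (h + 1) s'))) + f (h + 1) := by
      rw [hfsucc]
      simp only [hf]
      rw [← Finset.sum_add_distrib]
      refine Finset.sum_congr rfl fun s _ => ?_
      rw [← Finset.sum_add_distrib]
      exact Finset.sum_congr rfl fun a _ => claim1 s a
    rw [hfh]
    gcongr
    simp only [hg]
    refine Finset.sum_le_sum fun s _ => Finset.sum_le_sum fun a _ => ?_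
    exact mul_le_mul_of_nonneg_left (le_abs_self _) (hd_nonneg h s a)
  have main : ∀ n h, h + n = H → f h ≤ ∑ k ∈ Finset.Ico h H, g k := by
    intro n
    induction n with
    | zero =>
      intro h hhH
      simp only [Nat.add_zero] at hhH
      subst hhH
      simp [hfH]
    | succ n ih =>
      intro h hhH
      have hlt : h < H := by omega
      have h1 : f h ≤ g h + f (h + 1) := hstep h hlt
      have h2 : f (h + 1) ≤ ∑ k ∈ Finset.Ico (h + 1) H, g k := ih (h + 1) (by omega)
      rw [Finset.sum_eq_sum_Ico_succ_bot hlt]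
      linarith
  have := main H 0 (by omega)
  rw [hf0] at this
  rw [Finset.range_eq_Ico]
  exact this
end

section
/- Consider a finite MDP with state space S, action space A, horizon H, true transition kernel P*, reward r, and initial state s₀, and let π be a deterministic nonstationary policy. Write V^π_h := V^π_{h;P*}. Then ∑_{h=0}^{H−1} E_{(s,a)∼d^π_h} [ (Var_{P*} V^π_{h+1})(s,a) ] = Var_π, where Var_π is the variance of the cumulative reward ∑_{h=0}^{H−1} r(s_h, π_h(s_h)) of the random trajectory (s_0 = s₀, s_1, …, s_{H−1}) generated by s_{h+1} ∼ P*(s_h, π_h(s_h)). (Change-of-variance / law of total variance lemma.) -/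
open Finset

/-- Index a trajectory of length `H ≥ 1` by a natural number (clamped to `H - 1`),
so that `idx H hH h = h` whenever `h < H`. -/
def idx (H : ℕ) (hH : 0 < H) (n : ℕ) : Fin H := ⟨min n (H - 1), by omega⟩

/-- Probability that the policy `pol`, run from `s0` in the model `P`, generates the
trajectory of states `τ = (s_0, …, s_{H-1})`. -/
noncomputable def trajProb {S A : Type*} [Fintype S] [DecidableEq S]
    (H : ℕ) (hH : 0 < H) (P : S → A → S → ℝ) (s0 : S) (pol : ℕ → S → A)
    (τ : Fin H → S) : ℝ :=
  (if τ (idx H hH 0) = s0 then 1 else 0) *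
    ∏ h ∈ Finset.range (H - 1),
      P (τ (idx H hH h)) (pol h (τ (idx H hH h))) (τ (idx H hH (h + 1)))

/-- Cumulative reward `∑_{h=0}^{H-1} r(s_h, π_h(s_h))` of a trajectory. -/
def trajReward {S A : Type*} (H : ℕ) (hH : 0 < H) (r : S → A → ℝ) (pol : ℕ → S → A)
    (τ : Fin H → S) : ℝ :=
  ∑ h ∈ Finset.range H, r (τ (idx H hH h)) (pol h (τ (idx H hH h)))

/- ===================== auxiliary development ===================== -/

lemma sum_comm3 {S A U : Type*} [Fintype S] [Fintype A] [Fintype U] (f : S → A → U → ℝ) :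
    ∑ s, ∑ a, ∑ u, f s a u = ∑ u, ∑ s, ∑ a, f s a u :=
  (Finset.sum_congr rfl fun _ _ => Finset.sum_comm).trans Finset.sum_comm

/-- Occupancy measure of policy `pol` in model `P` started at `s0`. -/
noncomputable def occ {S A : Type*} [Fintype S] [Fintype A] [DecidableEq S] [DecidableEq A]
    (P : S → A → S → ℝ) (pol : ℕ → S → A) (s0 : S) : ℕ → S → A → ℝ
  | 0 => fun s a => if s = s0 ∧ a = pol 0 s0 then 1 else 0
  | (h+1) => fun s' a' =>
      ∑ s, ∑ a, occ P pol s0 h s a * P s a s' * (if a' = pol (h+1) s' then 1 else 0)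

lemma occ_succ {S A : Type*} [Fintype S] [Fintype A] [DecidableEq S] [DecidableEq A]
    (P : S → A → S → ℝ) (pol : ℕ → S → A) (s0 : S) (h : ℕ) (s' : S) (a' : A) :
    occ P pol s0 (h+1) s' a' =
      ∑ s, ∑ a, occ P pol s0 h s a * P s a s' * (if a' = pol (h+1) s' then 1 else 0) := rfl

lemma occ_shift {S A : Type*} [Fintype S] [Fintype A] [DecidableEq S] [DecidableEq A]
    (P : S → A → S → ℝ) (pol : ℕ → S → A) (s0 : S) (h : ℕ) (s' : S) (a' : A) :
    occ P pol s0 (h+1) s' a' =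
      ∑ u, P s0 (pol 0 s0) u * occ P (fun k => pol (k+1)) u h s' a' := by
  induction h generalizing s' a' with
  | zero =>
      simp only [occ]
      simp [ite_and, Finset.sum_ite_eq, mul_ite, ite_mul, Finset.sum_ite_eq']
  | succ h ih =>
      rw [occ_succ]
      simp only [ih]
      simp only [occ_succ, Finset.sum_mul, Finset.mul_sum]
      rw [sum_comm3]
      exact Finset.sum_congr rfl fun u _ => Finset.sum_congr rfl fun s _ =>
        Finset.sum_congr rfl fun a _ => by ring

/-- One-step conditional variance term. -/
noncomputable def Wf {S A : Type*} [Fintype S] (P : S → A → S → ℝ) (V : ℕ → S → ℝ)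
    (h : ℕ) (s : S) (a : A) : ℝ :=
  (∑ s', P s a s' * V (h + 1) s' ^ 2) - (∑ s', P s a s' * V (h + 1) s') ^ 2

/-- Total expected sum of conditional variances up to time `m`. -/
noncomputable def Sig {S A : Type*} [Fintype S] [Fintype A] [DecidableEq S] [DecidableEq A]
    (P : S → A → S → ℝ) (pol : ℕ → S → A) (V : ℕ → S → ℝ) (s0 : S) (m : ℕ) : ℝ :=
  ∑ h ∈ Finset.range m, ∑ s, ∑ a, occ P pol s0 h s a * Wf P V h s a

lemma Sig_succ {S A : Type*} [Fintype S] [Fintype A] [DecidableEq S] [DecidableEq A]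
    (P : S → A → S → ℝ) (pol : ℕ → S → A) (V : ℕ → S → ℝ) (s0 : S) (m : ℕ) :
    Sig P pol V s0 (m+1) = Wf P V 0 s0 (pol 0 s0) +
      ∑ u, P s0 (pol 0 s0) u * Sig P (fun k => pol (k+1)) (fun h => V (h+1)) u m := by
  unfold Sig
  rw [Finset.sum_range_succ']
  have hg0 : (∑ s, ∑ a, occ P pol s0 0 s a * Wf P V 0 s a) = Wf P V 0 s0 (pol 0 s0) := by
    simp only [occ]
    simp [ite_and, Finset.sum_ite_eq, mul_ite, ite_mul, Finset.sum_ite_eq']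
  have hWsh : ∀ h s a, Wf P V (h+1) s a = Wf P (fun k => V (k+1)) h s a := fun _ _ _ => rfl
  have hgs : (∑ h ∈ Finset.range m, ∑ s, ∑ a, occ P pol s0 (h+1) s a * Wf P V (h+1) s a) =
      ∑ u, P s0 (pol 0 s0) u *
        ∑ h ∈ Finset.range m, ∑ s, ∑ a,
          occ P (fun k => pol (k+1)) u h s a * Wf P (fun k => V (k+1)) h s a := by
    simp only [occ_shift, Finset.sum_mul, hWsh]
    calc ∑ h ∈ Finset.range m, ∑ s, ∑ a, ∑ u,
            P s0 (pol 0 s0) u * occ P (fun k => pol (k+1)) u h s a *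
              Wf P (fun k => V (k+1)) h s a
        = ∑ h ∈ Finset.range m, ∑ u, ∑ s, ∑ a,
            P s0 (pol 0 s0) u * occ P (fun k => pol (k+1)) u h s a *
              Wf P (fun k => V (k+1)) h s a :=
          Finset.sum_congr rfl fun h _ => sum_comm3 _
      _ = ∑ u, ∑ h ∈ Finset.range m, ∑ s, ∑ a,
            P s0 (pol 0 s0) u * occ P (fun k => pol (k+1)) u h s a *
              Wf P (fun k => V (k+1)) h s a := Finset.sum_comm
      _ = ∑ u, P s0 (pol 0 s0) u *
            ∑ h ∈ Finset.range m, ∑ s, ∑ a,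
              occ P (fun k => pol (k+1)) u h s a * Wf P (fun k => V (k+1)) h s a := by
          refine Finset.sum_congr rfl fun u _ => ?_
          rw [Finset.mul_sum]
          refine Finset.sum_congr rfl fun h _ => ?_
          rw [Finset.mul_sum]
          refine Finset.sum_congr rfl fun s _ => ?_
          rw [Finset.mul_sum]
          exact Finset.sum_congr rfl fun a _ => by ring
  rw [hg0, hgs, add_comm]

lemma idx_zero (H : ℕ) (hH : 0 < H) : idx H hH 0 = ⟨0, hH⟩ := by
  apply Fin.ext; simp [idx]

lemma idx_succ (H : ℕ) (hH : 0 < H) (hH1 : 0 < H + 1) (k : ℕ) :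
    idx (H + 1) hH1 (k + 1) = Fin.succ (idx H hH k) := by
  apply Fin.ext
  simp [idx, Fin.succ]
  omega

lemma cons_idx_zero {S : Type*} (H : ℕ) (hH1 : 0 < H + 1) (s : S) (t : Fin H → S) :
    (Fin.cons s t : Fin (H+1) → S) (idx (H+1) hH1 0) = s := by
  rw [idx_zero, Fin.mk_zero, Fin.cons_zero]

lemma cons_idx_succ {S : Type*} (H : ℕ) (hH : 0 < H) (hH1 : 0 < H + 1) (s : S)
    (t : Fin H → S) (k : ℕ) :
    (Fin.cons s t : Fin (H+1) → S) (idx (H+1) hH1 (k+1)) = t (idx H hH k) := by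
  rw [idx_succ H hH, Fin.cons_succ]

lemma sum_pi_succ {S : Type*} [Fintype S] {H : ℕ} (f : (Fin (H+1) → S) → ℝ) :
    ∑ τ : Fin (H+1) → S, f τ = ∑ s : S, ∑ t : Fin H → S, f (Fin.cons s t) := by
  rw [← (Fin.consEquiv (fun _ : Fin (H+1) => S)).sum_comp f, Fintype.sum_prod_type]
  rfl

lemma sum_pi_one {S : Type*} [Fintype S] (f : (Fin 1 → S) → ℝ) :
    ∑ τ : Fin 1 → S, f τ = ∑ s : S, f (fun _ => s) := by
  rw [← (Equiv.funUnique (Fin 1) S).symm.sum_comp f]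
  rfl

lemma trajProb_cons {S A : Type*} [Fintype S] [DecidableEq S]
    (n : ℕ) (h1 : 0 < n + 1) (h2 : 0 < n + 2) (P : S → A → S → ℝ) (s0 : S)
    (pol : ℕ → S → A) (s : S) (t : Fin (n+1) → S) :
    trajProb (n+2) h2 P s0 pol (Fin.cons s t) =
      (if s = s0 then 1 else 0) *
        ∑ u, P s0 (pol 0 s0) u * trajProb (n+1) h1 P u (fun k => pol (k+1)) t := by
  unfold trajProb
  rw [cons_idx_zero]
  have collapse : ∀ (g : S → ℝ) (b : S) (X : ℝ),
      (∑ u, g u * ((if b = u then 1 else 0) * X)) = g b * X := by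
    intro g b X
    simp [mul_ite, ite_mul, mul_zero, zero_mul, mul_one, Finset.sum_ite_eq]
  by_cases hs : s = s0
  · subst hs
    rw [if_pos rfl, one_mul, collapse]
    rw [show (n+2-1) = n+1 from rfl, Finset.prod_range_succ']
    simp only [cons_idx_zero, cons_idx_succ (n+1) h1 h2, show n+1-1 = n from rfl]
    ring
  · simp [hs]

lemma trajReward_cons {S A : Type*} (n : ℕ) (h1 : 0 < n + 1) (h2 : 0 < n + 2)
    (r : S → A → ℝ) (pol : ℕ → S → A) (s : S) (t : Fin (n+1) → S) :
    trajReward (n+2) h2 r pol (Fin.cons s t) =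
      r s (pol 0 s) + trajReward (n+1) h1 r (fun k => pol (k+1)) t := by
  unfold trajReward
  rw [Finset.sum_range_succ']
  simp only [cons_idx_zero, cons_idx_succ (n+1) h1 h2]
  exact add_comm _ _

lemma aux {S A : Type*} [Fintype S] [Fintype A] [DecidableEq S] [DecidableEq A] :
    ∀ (n : ℕ) (hH : 0 < n + 1) (P : S → A → S → ℝ) (r : S → A → ℝ)
      (pol : ℕ → S → A) (V : ℕ → S → ℝ) (s0 : S),
      (∀ s a, ∑ s', P s a s' = 1) →
      (∀ s, V (n + 1) s = 0) →
      (∀ h < n + 1, ∀ s, V h s = r s (pol h s) + ∑ s', P s (pol h s) s' * V (h + 1) s') →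
      (∑ τ : Fin (n+1) → S, trajProb (n+1) hH P s0 pol τ = 1) ∧
      (∑ τ : Fin (n+1) → S,
          trajProb (n+1) hH P s0 pol τ * trajReward (n+1) hH r pol τ = V 0 s0) ∧
      (∑ τ : Fin (n+1) → S,
          trajProb (n+1) hH P s0 pol τ * trajReward (n+1) hH r pol τ ^ 2 =
        V 0 s0 ^ 2 + Sig P pol V s0 (n+1)) := by
  intro n
  induction n with
  | zero =>
      intro hH P r pol V s0 hP hVH hB
      have hb : ∀ s, V 0 s = r s (pol 0 s) := by
        intro s
        have h0 := hB 0 (by norm_num) s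
        simpa [hVH] using h0
      refine ⟨?_, ?_, ?_⟩
      · rw [sum_pi_one]
        simp [trajProb, Finset.sum_ite_eq']
      · rw [sum_pi_one]
        simp [trajProb, trajReward, hb, Finset.sum_ite_eq']
      · rw [sum_pi_one]
        simp [trajProb, trajReward, hb, hVH, Sig, Wf, occ, Finset.sum_ite_eq']
  | succ n ih =>
      intro hH2 P r pol V s0 hP hVH hB
      have h1 : 0 < n + 1 := Nat.succ_pos n
      have IH := fun u : S => ih h1 P r (fun k => pol (k+1)) (fun h => V (h+1)) u hP
        (fun s => hVH s) (fun h hh s => hB (h+1) (by omega) s)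
      have IH1 : ∀ u : S, ∑ t : Fin (n+1) → S,
          trajProb (n+1) h1 P u (fun k => pol (k+1)) t = 1 := fun u => (IH u).1
      have IH2 : ∀ u : S, ∑ t : Fin (n+1) → S,
          trajProb (n+1) h1 P u (fun k => pol (k+1)) t *
            trajReward (n+1) h1 r (fun k => pol (k+1)) t = V 1 u := fun u => (IH u).2.1
      have IH3 : ∀ u : S, ∑ t : Fin (n+1) → S,
          trajProb (n+1) h1 P u (fun k => pol (k+1)) t *
            trajReward (n+1) h1 r (fun k => pol (k+1)) t ^ 2 =
          V 1 u ^ 2 + Sig P (fun k => pol (k+1)) (fun h => V (h+1)) u (n+1) :=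
        fun u => (IH u).2.2
      have key : ∀ F : (Fin (n+2) → S) → ℝ,
          ∑ τ : Fin (n+2) → S, trajProb (n+2) hH2 P s0 pol τ * F τ =
            ∑ u, P s0 (pol 0 s0) u *
              ∑ t : Fin (n+1) → S,
                trajProb (n+1) h1 P u (fun k => pol (k+1)) t * F (Fin.cons s0 t) := by
        intro F
        rw [sum_pi_succ (H := n+1)]
        rw [Finset.sum_comm]
        simp only [trajProb_cons n h1 hH2 P s0 pol, ite_mul, one_mul, zero_mul,
          Finset.sum_ite_eq', Finset.mem_univ, if_true]
        simp only [Finset.sum_mul]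
        rw [Finset.sum_comm]
        simp only [Finset.mul_sum]
        exact Finset.sum_congr rfl fun u _ => Finset.sum_congr rfl fun t _ => mul_assoc _ _ _
      have hV0 : V 0 s0 = r s0 (pol 0 s0) + ∑ s', P s0 (pol 0 s0) s' * V 1 s' := by
        simpa using hB 0 (by omega) s0
      refine ⟨?_, ?_, ?_⟩
      · have k1 := key (fun _ => 1)
        simp only [mul_one] at k1
        rw [k1]
        simp only [IH1, mul_one]
        exact hP s0 (pol 0 s0)
      · have k2 := key (trajReward (n+2) hH2 r pol)
        rw [k2]
        simp only [trajReward_cons n h1 hH2 r pol]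
        have inner : ∀ u : S, (∑ t : Fin (n+1) → S,
            trajProb (n+1) h1 P u (fun k => pol (k+1)) t *
              (r s0 (pol 0 s0) + trajReward (n+1) h1 r (fun k => pol (k+1)) t)) =
            r s0 (pol 0 s0) + V 1 u := by
          intro u
          calc (∑ t : Fin (n+1) → S,
              trajProb (n+1) h1 P u (fun k => pol (k+1)) t *
                (r s0 (pol 0 s0) + trajReward (n+1) h1 r (fun k => pol (k+1)) t))
              = (∑ t : Fin (n+1) → S, trajProb (n+1) h1 P u (fun k => pol (k+1)) t) *
                  r s0 (pol 0 s0) +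
                ∑ t : Fin (n+1) → S, trajProb (n+1) h1 P u (fun k => pol (k+1)) t *
                  trajReward (n+1) h1 r (fun k => pol (k+1)) t := by
                rw [Finset.sum_mul, ← Finset.sum_add_distrib]
                exact Finset.sum_congr rfl fun t _ => by ring
            _ = r s0 (pol 0 s0) + V 1 u := by rw [IH1 u, IH2 u, one_mul]
        simp only [inner]
        calc ∑ u, P s0 (pol 0 s0) u * (r s0 (pol 0 s0) + V 1 u)
            = (∑ u, P s0 (pol 0 s0) u) * r s0 (pol 0 s0) +
                ∑ u, P s0 (pol 0 s0) u * V 1 u := by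
              rw [Finset.sum_mul, ← Finset.sum_add_distrib]
              exact Finset.sum_congr rfl fun u _ => by ring
          _ = V 0 s0 := by rw [hP, one_mul, ← hV0]
      · have k3 := key (fun τ => trajReward (n+2) hH2 r pol τ ^ 2)
        rw [k3]
        simp only [trajReward_cons n h1 hH2 r pol]
        have inner : ∀ u : S, (∑ t : Fin (n+1) → S,
            trajProb (n+1) h1 P u (fun k => pol (k+1)) t *
              (r s0 (pol 0 s0) + trajReward (n+1) h1 r (fun k => pol (k+1)) t) ^ 2) =
            r s0 (pol 0 s0) ^ 2 + 2 * r s0 (pol 0 s0) * V 1 u +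
              (V 1 u ^ 2 + Sig P (fun k => pol (k+1)) (fun h => V (h+1)) u (n+1)) := by
          intro u
          calc (∑ t : Fin (n+1) → S,
              trajProb (n+1) h1 P u (fun k => pol (k+1)) t *
                (r s0 (pol 0 s0) + trajReward (n+1) h1 r (fun k => pol (k+1)) t) ^ 2)
              = (∑ t : Fin (n+1) → S, trajProb (n+1) h1 P u (fun k => pol (k+1)) t) *
                  r s0 (pol 0 s0) ^ 2 +
                (2 * r s0 (pol 0 s0)) *
                  (∑ t : Fin (n+1) → S, trajProb (n+1) h1 P u (fun k => pol (k+1)) t *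
                    trajReward (n+1) h1 r (fun k => pol (k+1)) t) +
                ∑ t : Fin (n+1) → S, trajProb (n+1) h1 P u (fun k => pol (k+1)) t *
                  trajReward (n+1) h1 r (fun k => pol (k+1)) t ^ 2 := by
                rw [Finset.sum_mul, Finset.mul_sum, ← Finset.sum_add_distrib,
                  ← Finset.sum_add_distrib]
                exact Finset.sum_congr rfl fun t _ => by ring
            _ = _ := by rw [IH1 u, IH2 u, IH3 u]; ring
        simp only [inner]
        rw [Sig_succ]
        have split : ∑ u, P s0 (pol 0 s0) u *
              (r s0 (pol 0 s0) ^ 2 + 2 * r s0 (pol 0 s0) * V 1 u +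
                (V 1 u ^ 2 + Sig P (fun k => pol (k+1)) (fun h => V (h+1)) u (n+1))) =
            (∑ u, P s0 (pol 0 s0) u) * r s0 (pol 0 s0) ^ 2 +
              (2 * r s0 (pol 0 s0)) * (∑ u, P s0 (pol 0 s0) u * V 1 u) +
              ((∑ u, P s0 (pol 0 s0) u * V 1 u ^ 2) +
                ∑ u, P s0 (pol 0 s0) u *
                  Sig P (fun k => pol (k+1)) (fun h => V (h+1)) u (n+1)) := by
          rw [Finset.sum_mul, Finset.mul_sum, ← Finset.sum_add_distrib,
            ← Finset.sum_add_distrib, ← Finset.sum_add_distrib]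
          exact Finset.sum_congr rfl fun u _ => by ring
        rw [split, hP, hV0]
        have hW0 : Wf P V 0 s0 (pol 0 s0) =
            (∑ s', P s0 (pol 0 s0) s' * V 1 s' ^ 2) -
              (∑ s', P s0 (pol 0 s0) s' * V 1 s') ^ 2 := rfl
        rw [hW0]
        ring

/-- Change-of-variance / law of total variance lemma:
`∑_{h<H} E_{(s,a)∼d_h^π} [Var_{P*} V^π_{h+1}(s,a)] = Var_π`. -/
theorem law_of_total_variance {S A : Type*} [Fintype S] [Fintype A]
    [DecidableEq S] [DecidableEq A]
    (H : ℕ) (hH : 0 < H) (Pstar : S → A → S → ℝ) (r : S → A → ℝ) (s0 : S) (pol : ℕ → S → A)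
    (hPstar : ∀ s a, (∀ s', 0 ≤ Pstar s a s') ∧ ∑ s', Pstar s a s' = 1)
    -- value functions of `pol` under the true model `P*`
    (V : ℕ → S → ℝ)
    (hVH : ∀ s, V H s = 0)
    (hVBellman : ∀ h < H, ∀ s,
      V h s = r s (pol h s) + ∑ s', Pstar s (pol h s) s' * V (h + 1) s')
    -- state–action occupancy measures of `pol` under the true model `P*`
    (d : ℕ → S → A → ℝ)
    (hd0 : ∀ s a, d 0 s a = if s = s0 ∧ a = pol 0 s0 then 1 else 0)
    (hdstep : ∀ h s' a', d (h + 1) s' a' =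
      ∑ s, ∑ a, d h s a * Pstar s a s' * (if a' = pol (h + 1) s' then 1 else 0)) :
    ∑ h ∈ Finset.range H, ∑ s, ∑ a, d h s a *
        ((∑ s', Pstar s a s' * (V (h + 1) s') ^ 2) -
          (∑ s', Pstar s a s' * V (h + 1) s') ^ 2) =
      ∑ τ : Fin H → S, trajProb H hH Pstar s0 pol τ *
        (trajReward H hH r pol τ -
          ∑ τ' : Fin H → S, trajProb H hH Pstar s0 pol τ' * trajReward H hH r pol τ') ^ 2 := by
  have hde : ∀ h s a, d h s a = occ Pstar pol s0 h s a := by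
    intro h
    induction h with
    | zero => intro s a; rw [hd0]; rfl
    | succ h ihh =>
        intro s' a'
        rw [hdstep, occ_succ]
        exact Finset.sum_congr rfl fun s _ => Finset.sum_congr rfl fun a _ => by rw [ihh]
  obtain ⟨n, rfl⟩ : ∃ n, H = n + 1 := ⟨H - 1, by omega⟩
  obtain ⟨g1, g2, g3⟩ := aux n hH Pstar r pol V s0 (fun s a => (hPstar s a).2) hVH hVBellman
  simp only [hde]
  rw [g2]
  have expand : ∑ τ : Fin (n+1) → S, trajProb (n+1) hH Pstar s0 pol τ *
        (trajReward (n+1) hH r pol τ - V 0 s0) ^ 2 =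
      (∑ τ : Fin (n+1) → S, trajProb (n+1) hH Pstar s0 pol τ *
          trajReward (n+1) hH r pol τ ^ 2) -
        2 * V 0 s0 * (∑ τ : Fin (n+1) → S, trajProb (n+1) hH Pstar s0 pol τ *
          trajReward (n+1) hH r pol τ) +
        V 0 s0 ^ 2 * (∑ τ : Fin (n+1) → S, trajProb (n+1) hH Pstar s0 pol τ) := by
    rw [Finset.mul_sum, Finset.mul_sum, ← Finset.sum_sub_distrib, ← Finset.sum_add_distrib]
    exact Finset.sum_congr rfl fun τ _ => by ring
  rw [expand, g1, g2, g3]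
  show Sig Pstar pol V s0 (n+1) = _
  ring
end

section
/- Consider a finite MDP with state space S, action space A, horizon H, true transition kernel P*, reward r, and initial state s₀, let π be a deterministic nonstationary policy, and let P̂ be any transition kernel. Assume 0 ≤ V^π_{h;P*}(s) ≤ 1 and 0 ≤ V^π_{h;P̂}(s) ≤ 1 for all 0 ≤ h ≤ H and s ∈ S. Writing Δ_h := V^π_{h;P̂} − V^π_{h;P*}, we have ∑_{h=0}^{H−1} E_{(s,a)∼d^π_h} [ (Var_{P*} Δ_{h+1})(s,a) ] ≤ 2·∑_{h=0}^{H−1} E_{(s,a)∼d^π_h} [ | (P̂ V^π_{h+1;P̂})(s,a) − (P* V^π_{h+1;P̂})(s,a) | ]. -/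
open Finset

/-- the cumulative variance of the value-difference `Δ_{h+1} = V̂_{h+1} − V*_{h+1}`
along the occupancy of `π` is at most twice the cumulative mean model-error. -/
theorem variance_of_diff_le {S A : Type*} [Fintype S] [Fintype A]
    [DecidableEq S] [DecidableEq A]
    (H : ℕ) (Pstar Phat : S → A → S → ℝ) (r : S → A → ℝ) (s0 : S) (pol : ℕ → S → A)
    (hPstar : ∀ s a, (∀ s', 0 ≤ Pstar s a s') ∧ ∑ s', Pstar s a s' = 1)
    (hPhat : ∀ s a, (∀ s', 0 ≤ Phat s a s') ∧ ∑ s', Phat s a s' = 1)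
    -- value functions of `pol` under the true model `P*` and under `P̂`
    (Vstar Vhat : ℕ → S → ℝ)
    (hVstarH : ∀ s, Vstar H s = 0)
    (hVstarBellman : ∀ h < H, ∀ s,
      Vstar h s = r s (pol h s) + ∑ s', Pstar s (pol h s) s' * Vstar (h + 1) s')
    (hVhatH : ∀ s, Vhat H s = 0)
    (hVhatBellman : ∀ h < H, ∀ s,
      Vhat h s = r s (pol h s) + ∑ s', Phat s (pol h s) s' * Vhat (h + 1) s')
    -- values are normalized in [0,1]
    (hVstar01 : ∀ h ≤ H, ∀ s, 0 ≤ Vstar h s ∧ Vstar h s ≤ 1)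
    (hVhat01 : ∀ h ≤ H, ∀ s, 0 ≤ Vhat h s ∧ Vhat h s ≤ 1)
    -- state–action occupancy measures of `pol` under the true model `P*`
    (d : ℕ → S → A → ℝ)
    (hd0 : ∀ s a, d 0 s a = if s = s0 ∧ a = pol 0 s0 then 1 else 0)
    (hdstep : ∀ h s' a', d (h + 1) s' a' =
      ∑ s, ∑ a, d h s a * Pstar s a s' * (if a' = pol (h + 1) s' then 1 else 0)) :
    ∑ h ∈ Finset.range H, ∑ s, ∑ a, d h s a *
        ((∑ s', Pstar s a s' * (Vhat (h + 1) s' - Vstar (h + 1) s') ^ 2) -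
          (∑ s', Pstar s a s' * (Vhat (h + 1) s' - Vstar (h + 1) s')) ^ 2) ≤
      2 * ∑ h ∈ Finset.range H, ∑ s, ∑ a, d h s a *
        |(∑ s', Phat s a s' * Vhat (h + 1) s') - (∑ s', Pstar s a s' * Vhat (h + 1) s')| := by
  have dnn : ∀ h s a, 0 ≤ d h s a := by
    intro h
    induction h with
    | zero => intro s a; rw [hd0]; split <;> norm_num
    | succ h ih =>
      intro s a; rw [hdstep]
      refine Finset.sum_nonneg fun s' _ => Finset.sum_nonneg fun a' _ => ?_
      refine mul_nonneg (mul_nonneg (ih _ _) ((hPstar _ _).1 _)) ?_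
      split <;> norm_num
  have dsupp : ∀ h s a, a ≠ pol h s → d h s a = 0 := by
    intro h s a ha
    match h with
    | 0 =>
      rw [hd0]; rw [if_neg]; rintro ⟨hs, haa⟩; subst hs; exact ha haa
    | h + 1 =>
      rw [hdstep]
      refine Finset.sum_eq_zero fun s' _ => Finset.sum_eq_zero fun a' _ => ?_
      rw [if_neg ha, mul_zero]
  set g : ℕ → ℝ := fun h => ∑ s, ∑ a, d h s a * (Vhat h s - Vstar h s) ^ 2 with hg
  have marg : ∀ h s', ∑ a', d (h + 1) s' a' = ∑ s, ∑ a, d h s a * Pstar s a s' := by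
    intro h s'
    simp only [hdstep]
    rw [Finset.sum_comm]
    refine Finset.sum_congr rfl fun s _ => ?_
    rw [Finset.sum_comm]
    refine Finset.sum_congr rfl fun a _ => ?_
    simp [mul_ite, Finset.sum_ite_eq', mul_one, mul_zero]
  have gstep : ∀ h, g (h + 1) =
      ∑ s, ∑ a, d h s a * ∑ s', Pstar s a s' * (Vhat (h + 1) s' - Vstar (h + 1) s') ^ 2 := by
    intro h
    have : g (h + 1) = ∑ s', (∑ a', d (h + 1) s' a') * (Vhat (h + 1) s' - Vstar (h + 1) s') ^ 2 := by
      simp [hg, Finset.sum_mul]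
    rw [this]
    simp only [marg, Finset.sum_mul, Finset.mul_sum]
    rw [Finset.sum_comm]
    refine Finset.sum_congr rfl fun s _ => ?_
    rw [Finset.sum_comm]
    refine Finset.sum_congr rfl fun a _ => ?_
    refine Finset.sum_congr rfl fun s' _ => by ring
  -- per-state key inequality
  have key : ∀ h, h < H → ∀ s,
      (∑ s', Pstar s (pol h s) s' * (Vhat (h + 1) s' - Vstar (h + 1) s') ^ 2) -
        (∑ s', Pstar s (pol h s) s' * (Vhat (h + 1) s' - Vstar (h + 1) s')) ^ 2 ≤
      (∑ s', Pstar s (pol h s) s' * (Vhat (h + 1) s' - Vstar (h + 1) s') ^ 2) -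
        (Vhat h s - Vstar h s) ^ 2 +
        2 * |(∑ s', Phat s (pol h s) s' * Vhat (h + 1) s') -
          (∑ s', Pstar s (pol h s) s' * Vhat (h + 1) s')| := by
    intro h hh s
    set a := pol h s
    set Δ := Vhat h s - Vstar h s with hΔ
    set ε := (∑ s', Phat s a s' * Vhat (h + 1) s') - (∑ s', Pstar s a s' * Vhat (h + 1) s') with hε
    have hm : (∑ s', Pstar s a s' * (Vhat (h + 1) s' - Vstar (h + 1) s')) = Δ - ε := by
      have h1 := hVhatBellman h hh s
      have h2 := hVstarBellman h hh s
      simp only [mul_sub, Finset.sum_sub_distrib]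
      rw [hΔ, hε, h1, h2]; ring
    have habs : |Δ| ≤ 1 := by
      have h1 := hVhat01 h (le_of_lt hh) s
      have h2 := hVstar01 h (le_of_lt hh) s
      rw [abs_le]; constructor <;> [linarith [h1.1, h2.2]; linarith [h1.2, h2.1]]
    rw [hm]
    have h3 : Δ * ε ≤ |ε| := by
      calc Δ * ε ≤ |Δ * ε| := le_abs_self _
      _ = |Δ| * |ε| := abs_mul _ _
      _ ≤ 1 * |ε| := by have := abs_nonneg ε; nlinarith
      _ = |ε| := one_mul _
    nlinarith [sq_nonneg ε]
  -- main chain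
  have step1 : ∑ h ∈ Finset.range H, ∑ s, ∑ a, d h s a *
        ((∑ s', Pstar s a s' * (Vhat (h + 1) s' - Vstar (h + 1) s') ^ 2) -
          (∑ s', Pstar s a s' * (Vhat (h + 1) s' - Vstar (h + 1) s')) ^ 2) ≤
      ∑ h ∈ Finset.range H, ∑ s, ∑ a, d h s a *
        ((∑ s', Pstar s a s' * (Vhat (h + 1) s' - Vstar (h + 1) s') ^ 2) -
          (Vhat h s - Vstar h s) ^ 2 +
          2 * |(∑ s', Phat s a s' * Vhat (h + 1) s') -
            (∑ s', Pstar s a s' * Vhat (h + 1) s')|) := by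
    refine Finset.sum_le_sum fun h hh => Finset.sum_le_sum fun s _ => Finset.sum_le_sum fun a _ => ?_
    by_cases ha : a = pol h s
    · subst ha
      exact mul_le_mul_of_nonneg_left (key h (Finset.mem_range.mp hh) s) (dnn h s _)
    · rw [dsupp h s a ha]; simp
  have gH : g H = 0 := by
    simp [hg, hVhatH, hVstarH]
  have g0 : 0 ≤ g 0 := by
    refine Finset.sum_nonneg fun s _ => Finset.sum_nonneg fun a _ => ?_
    exact mul_nonneg (dnn 0 s a) (sq_nonneg _)
  have step2 : ∑ h ∈ Finset.range H, ∑ s, ∑ a, d h s a *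
        ((∑ s', Pstar s a s' * (Vhat (h + 1) s' - Vstar (h + 1) s') ^ 2) -
          (Vhat h s - Vstar h s) ^ 2 +
          2 * |(∑ s', Phat s a s' * Vhat (h + 1) s') -
            (∑ s', Pstar s a s' * Vhat (h + 1) s')|) =
      (g H - g 0) + 2 * ∑ h ∈ Finset.range H, ∑ s, ∑ a, d h s a *
        |(∑ s', Phat s a s' * Vhat (h + 1) s') - (∑ s', Pstar s a s' * Vhat (h + 1) s')| := by
    have expand : ∀ h ∈ Finset.range H, ∑ s, ∑ a, d h s a *
        ((∑ s', Pstar s a s' * (Vhat (h + 1) s' - Vstar (h + 1) s') ^ 2) -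
          (Vhat h s - Vstar h s) ^ 2 +
          2 * |(∑ s', Phat s a s' * Vhat (h + 1) s') -
            (∑ s', Pstar s a s' * Vhat (h + 1) s')|) =
        (g (h + 1) - g h) + 2 * ∑ s, ∑ a, d h s a *
          |(∑ s', Phat s a s' * Vhat (h + 1) s') - (∑ s', Pstar s a s' * Vhat (h + 1) s')| := by
      intro h _
      rw [gstep h]
      simp only [hg, mul_add, mul_sub, Finset.sum_add_distrib, Finset.sum_sub_distrib,
        Finset.mul_sum]
      congr 1
      refine Finset.sum_congr rfl fun s _ => Finset.sum_congr rfl fun a _ => by ring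
    rw [Finset.sum_congr rfl expand, Finset.sum_add_distrib, Finset.sum_range_sub,
      ← Finset.mul_sum]
  calc _ ≤ _ := step1
  _ = _ := step2
  _ ≤ 2 * ∑ h ∈ Finset.range H, ∑ s, ∑ a, d h s a *
        |(∑ s', Phat s a s' * Vhat (h + 1) s') - (∑ s', Pstar s a s' * Vhat (h + 1) s')| := by
    rw [gH]; linarith
end

section
/- Consider a finite MDP with state space S, action space A, horizon H, true transition kernel P*, reward r, and initial state s₀, let π be a deterministic nonstationary policy, and let P̂ be any transition kernel. Assume 0 ≤ V^π_{h;P*}(s) ≤ 1 and 0 ≤ V^π_{h;P̂}(s) ≤ 1 for all 0 ≤ h ≤ H and s ∈ S. Define A := ∑_{h=0}^{H−1} E_{(s,a)∼d^π_h}[(Var_{P*} V^π_{h+1;P̂})(s,a)] and B := ∑_{h=0}^{H−1} E_{(s,a)∼d^π_h}[(Var_{P*} V^π_{h+1;P*})(s,a)]. If for some η ≥ 0 one has ∑_{h=0}^{H−1} E_{(s,a)∼d^π_h}[ |(P̂ V^π_{h+1;P̂})(s,a) − (P* V^π_{h+1;P̂})(s,a)| ] ≤ 8·√(22·η·A) +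 440·η, then A ≤ 4·B + 26048·η. (Variance conversion lemma, deterministic form.) -/
-- variance identity
lemma aux_var_eq {S : Type*} [Fintype S] (P f : S → ℝ) (h1 : ∑ s, P s = 1) :
    (∑ s, P s * f s ^ 2) - (∑ s, P s * f s) ^ 2
      = ∑ s, P s * (f s - ∑ s', P s' * f s') ^ 2 := by
  have : ∀ s ∈ Finset.univ (α := S), P s * (f s - ∑ s', P s' * f s') ^ 2
      = P s * f s ^ 2 - 2 * (∑ s', P s' * f s') * (P s * f s)
        + (∑ s', P s' * f s') ^ 2 * P s := by
    intro s _; ring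
  rw [Finset.sum_congr rfl this, Finset.sum_add_distrib, Finset.sum_sub_distrib,
    ← Finset.mul_sum, ← Finset.mul_sum, h1]
  ring

lemma aux_var_nonneg {S : Type*} [Fintype S] (P f : S → ℝ)
    (hP : ∀ s, 0 ≤ P s) (h1 : ∑ s, P s = 1) :
    0 ≤ (∑ s, P s * f s ^ 2) - (∑ s, P s * f s) ^ 2 := by
  rw [aux_var_eq P f h1]
  exact Finset.sum_nonneg fun s _ => mul_nonneg (hP s) (sq_nonneg _)

lemma aux_var_split {S : Type*} [Fintype S] (P f g : S → ℝ)
    (hP : ∀ s, 0 ≤ P s) (h1 : ∑ s, P s = 1) :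
    (∑ s, P s * f s ^ 2) - (∑ s, P s * f s) ^ 2
      ≤ 2 * ((∑ s, P s * g s ^ 2) - (∑ s, P s * g s) ^ 2)
        + 2 * ((∑ s, P s * (f s - g s) ^ 2) - (∑ s, P s * (f s - g s)) ^ 2) := by
  rw [aux_var_eq P f h1, aux_var_eq P g h1, aux_var_eq P (fun s => f s - g s) h1,
    Finset.mul_sum, Finset.mul_sum, ← Finset.sum_add_distrib]
  have hm : (∑ s', P s' * (f s' - g s')) = (∑ s', P s' * f s') - (∑ s', P s' * g s') := by
    simp [mul_sub, Finset.sum_sub_distrib]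
  refine Finset.sum_le_sum fun s _ => ?_
  rw [hm]
  nlinarith [hP s, sq_nonneg ((g s - ∑ s', P s' * g s') - ((f s - g s) - ((∑ s', P s' * f s') - ∑ s', P s' * g s'))), sq_nonneg (f s - ∑ s', P s' * f s')]

/-- Variance conversion lemma, deterministic form. -/
theorem variance_conversion {S A : Type*} [Fintype S] [Fintype A]
    [DecidableEq S] [DecidableEq A]
    (H : ℕ) (Pstar Phat : S → A → S → ℝ) (r : S → A → ℝ) (s0 : S) (pol : ℕ → S → A)
    (hPstar : ∀ s a, (∀ s', 0 ≤ Pstar s a s') ∧ ∑ s', Pstar s a s' = 1)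
    (hPhat : ∀ s a, (∀ s', 0 ≤ Phat s a s') ∧ ∑ s', Phat s a s' = 1)
    -- value functions of `pol` under the true model `P*` and under `P̂`
    (Vstar Vhat : ℕ → S → ℝ)
    (hVstarH : ∀ s, Vstar H s = 0)
    (hVstarBellman : ∀ h < H, ∀ s,
      Vstar h s = r s (pol h s) + ∑ s', Pstar s (pol h s) s' * Vstar (h + 1) s')
    (hVhatH : ∀ s, Vhat H s = 0)
    (hVhatBellman : ∀ h < H, ∀ s,
      Vhat h s = r s (pol h s) + ∑ s', Phat s (pol h s) s' * Vhat (h + 1) s')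
    -- values are normalized in [0,1]
    (hVstar01 : ∀ h ≤ H, ∀ s, 0 ≤ Vstar h s ∧ Vstar h s ≤ 1)
    (hVhat01 : ∀ h ≤ H, ∀ s, 0 ≤ Vhat h s ∧ Vhat h s ≤ 1)
    -- state–action occupancy measures of `pol` under the true model `P*`
    (d : ℕ → S → A → ℝ)
    (hd0 : ∀ s a, d 0 s a = if s = s0 ∧ a = pol 0 s0 then 1 else 0)
    (hdstep : ∀ h s' a', d (h + 1) s' a' =
      ∑ s, ∑ a, d h s a * Pstar s a s' * (if a' = pol (h + 1) s' then 1 else 0))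
    -- the two cumulative variances
    (A B : ℝ)
    (hA : A = ∑ h ∈ Finset.range H, ∑ s, ∑ a, d h s a *
      ((∑ s', Pstar s a s' * (Vhat (h + 1) s') ^ 2) -
        (∑ s', Pstar s a s' * Vhat (h + 1) s') ^ 2))
    (hB : B = ∑ h ∈ Finset.range H, ∑ s, ∑ a, d h s a *
      ((∑ s', Pstar s a s' * (Vstar (h + 1) s') ^ 2) -
        (∑ s', Pstar s a s' * Vstar (h + 1) s') ^ 2))
    (η : ℝ) (hη : 0 ≤ η)
    (hmean : ∑ h ∈ Finset.range H, ∑ s, ∑ a, d h s a *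
        |(∑ s', Phat s a s' * Vhat (h + 1) s') - (∑ s', Pstar s a s' * Vhat (h + 1) s')| ≤
      8 * Real.sqrt (22 * η * A) + 440 * η) :
    A ≤ 4 * B + 26048 * η := by
  have hd_nonneg : ∀ h s a, 0 ≤ d h s a := by
    intro h
    induction h with
    | zero => intro s a; rw [hd0]; split <;> norm_num
    | succ n ih =>
      intro s a
      rw [hdstep]
      refine Finset.sum_nonneg fun s' _ => Finset.sum_nonneg fun a' _ => ?_
      refine mul_nonneg (mul_nonneg (ih s' a') ((hPstar s' a').1 s)) ?_
      split <;> norm_num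
  have hd_pol : ∀ h s a, a ≠ pol h s → d h s a = 0 := by
    intro h s a hne
    match h with
    | 0 =>
      rw [hd0]
      rw [if_neg]
      rintro ⟨rfl, rfl⟩
      exact hne rfl
    | (n+1) =>
      rw [hdstep]
      refine Finset.sum_eq_zero fun s' _ => Finset.sum_eq_zero fun a' _ => ?_
      rw [if_neg hne, mul_zero]
  have hpush : ∀ h (f : S → ℝ),
      ∑ s, ∑ a, d (h+1) s a * f s = ∑ s, ∑ a, d h s a * ∑ s', Pstar s a s' * f s' := by
    intro h f
    have step1 : ∀ s' : S, ∑ a', d (h+1) s' a' * f s'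
        = ∑ s, ∑ a, d h s a * Pstar s a s' * f s' := by
      intro s'
      rw [← Finset.sum_mul]
      rw [show (∑ a', d (h+1) s' a') = ∑ s, ∑ a, d h s a * Pstar s a s' by
        simp only [hdstep]
        rw [Finset.sum_comm]
        refine Finset.sum_congr rfl fun s _ => ?_
        rw [Finset.sum_comm]
        refine Finset.sum_congr rfl fun a _ => ?_
        simp [mul_ite]]
      rw [Finset.sum_mul]
      exact Finset.sum_congr rfl fun s _ => by rw [Finset.sum_mul]
    calc ∑ s', ∑ a', d (h+1) s' a' * f s'
        = ∑ s', ∑ s, ∑ a, d h s a * Pstar s a s' * f s' := Finset.sum_congr rfl fun s' _ => step1 s'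
      _ = ∑ s, ∑ s', ∑ a, d h s a * Pstar s a s' * f s' := Finset.sum_comm
      _ = ∑ s, ∑ a, ∑ s', d h s a * Pstar s a s' * f s' := Finset.sum_congr rfl fun s _ => Finset.sum_comm
      _ = ∑ s, ∑ a, d h s a * ∑ s', Pstar s a s' * f s' := by
          refine Finset.sum_congr rfl fun s _ => Finset.sum_congr rfl fun a _ => ?_
          rw [Finset.mul_sum]
          exact Finset.sum_congr rfl fun s' _ => by ring
  
  -- Bellman equation for the difference Δ = Vhat - Vstar
  have hΔBell : ∀ h < H, ∀ s,
      (∑ s', Pstar s (pol h s) s' * (Vhat (h+1) s' - Vstar (h+1) s'))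
        = (Vhat h s - Vstar h s) -
          ((∑ s', Phat s (pol h s) s' * Vhat (h+1) s') -
            (∑ s', Pstar s (pol h s) s' * Vhat (h+1) s')) := by
    intro h hh s
    rw [hVhatBellman h hh s, hVstarBellman h hh s]
    simp only [mul_sub, Finset.sum_sub_distrib]
    ring
  -- the per-step key inequality
  have key_h : ∀ h ∈ Finset.range H,
      (∑ s, ∑ a, d h s a *
        ((∑ s', Pstar s a s' * (Vhat (h + 1) s') ^ 2) -
          (∑ s', Pstar s a s' * Vhat (h + 1) s') ^ 2))
      ≤ 2 * (∑ s, ∑ a, d h s a *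
          ((∑ s', Pstar s a s' * (Vstar (h + 1) s') ^ 2) -
            (∑ s', Pstar s a s' * Vstar (h + 1) s') ^ 2))
        + 2 * ((∑ s, ∑ a, d (h+1) s a * (Vhat (h+1) s - Vstar (h+1) s) ^ 2)
            - (∑ s, ∑ a, d h s a * (Vhat h s - Vstar h s) ^ 2))
        + 4 * (∑ s, ∑ a, d h s a *
            |(∑ s', Phat s a s' * Vhat (h + 1) s') - (∑ s', Pstar s a s' * Vhat (h + 1) s')|) := by
    intro h hhmem
    have hh : h < H := Finset.mem_range.mp hhmem
    have hp := hpush h (fun s => (Vhat (h+1) s - Vstar (h+1) s) ^ 2)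
    rw [hp]
    have point : ∀ s a, d h s a *
        ((∑ s', Pstar s a s' * (Vhat (h + 1) s') ^ 2) -
          (∑ s', Pstar s a s' * Vhat (h + 1) s') ^ 2)
        ≤ 2 * (d h s a *
            ((∑ s', Pstar s a s' * (Vstar (h + 1) s') ^ 2) -
              (∑ s', Pstar s a s' * Vstar (h + 1) s') ^ 2))
          + (2 * (d h s a * (∑ s', Pstar s a s' * (Vhat (h+1) s' - Vstar (h+1) s') ^ 2))
            - 2 * (d h s a * (Vhat h s - Vstar h s) ^ 2))
          + 4 * (d h s a *
            |(∑ s', Phat s a s' * Vhat (h + 1) s') - (∑ s', Pstar s a s' * Vhat (h + 1) s')|) := by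
      intro s a
      by_cases hz : d h s a = 0
      · simp [hz]
      · have ha : a = pol h s := by
          by_contra hne
          exact hz (hd_pol h s a hne)
        subst ha
        have hd := hd_nonneg h s (pol h s)
        have hsplit := aux_var_split (Pstar s (pol h s)) (Vhat (h+1)) (Vstar (h+1))
          (hPstar s (pol h s)).1 (hPstar s (pol h s)).2
        have hbell := hΔBell h hh s
        have hV1 := hVhat01 h (le_of_lt hh) s
        have hV2 := hVstar01 h (le_of_lt hh) s
        have habs : |Vhat h s - Vstar h s| ≤ 1 :=
          abs_le.mpr ⟨by linarith [hV1.1, hV2.2], by linarith [hV1.2, hV2.1]⟩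
        set g := (∑ s', Phat s (pol h s) s' * Vhat (h + 1) s') -
          (∑ s', Pstar s (pol h s) s' * Vhat (h + 1) s') with hg
        set D := Vhat h s - Vstar h s with hD
        have key2 : D ^ 2 - 2 * |g| ≤ (∑ s', Pstar s (pol h s) s' * (Vhat (h+1) s' - Vstar (h+1) s')) ^ 2 := by
          rw [hbell]
          have h1 : D * g ≤ |g| := by
            calc D * g ≤ |D * g| := le_abs_self _
              _ = |D| * |g| := abs_mul D g
              _ ≤ 1 * |g| := mul_le_mul_of_nonneg_right habs (abs_nonneg g)
              _ = |g| := one_mul _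
          nlinarith [sq_nonneg g]
        have hfinal : (∑ s', Pstar s (pol h s) s' * (Vhat (h + 1) s') ^ 2) -
            (∑ s', Pstar s (pol h s) s' * Vhat (h + 1) s') ^ 2
            ≤ 2 * ((∑ s', Pstar s (pol h s) s' * (Vstar (h + 1) s') ^ 2) -
              (∑ s', Pstar s (pol h s) s' * Vstar (h + 1) s') ^ 2)
            + (2 * (∑ s', Pstar s (pol h s) s' * (Vhat (h+1) s' - Vstar (h+1) s') ^ 2)
              - 2 * D ^ 2) + 4 * |g| := by
          nlinarith [hsplit, key2]
        calc d h s (pol h s) *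
            ((∑ s', Pstar s (pol h s) s' * (Vhat (h + 1) s') ^ 2) -
              (∑ s', Pstar s (pol h s) s' * Vhat (h + 1) s') ^ 2)
            ≤ d h s (pol h s) *
              (2 * ((∑ s', Pstar s (pol h s) s' * (Vstar (h + 1) s') ^ 2) -
                (∑ s', Pstar s (pol h s) s' * Vstar (h + 1) s') ^ 2)
              + (2 * (∑ s', Pstar s (pol h s) s' * (Vhat (h+1) s' - Vstar (h+1) s') ^ 2)
                - 2 * D ^ 2) + 4 * |g|) := mul_le_mul_of_nonneg_left hfinal hd
          _ = _ := by ring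
    calc (∑ s, ∑ a, d h s a *
        ((∑ s', Pstar s a s' * (Vhat (h + 1) s') ^ 2) -
          (∑ s', Pstar s a s' * Vhat (h + 1) s') ^ 2))
        ≤ ∑ s, ∑ a, (2 * (d h s a *
            ((∑ s', Pstar s a s' * (Vstar (h + 1) s') ^ 2) -
              (∑ s', Pstar s a s' * Vstar (h + 1) s') ^ 2))
          + (2 * (d h s a * (∑ s', Pstar s a s' * (Vhat (h+1) s' - Vstar (h+1) s') ^ 2))
            - 2 * (d h s a * (Vhat h s - Vstar h s) ^ 2))
          + 4 * (d h s a *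
            |(∑ s', Phat s a s' * Vhat (h + 1) s') - (∑ s', Pstar s a s' * Vhat (h + 1) s')|)) :=
          Finset.sum_le_sum fun s _ => Finset.sum_le_sum fun a _ => point s a
      _ = _ := by
          simp only [Finset.sum_add_distrib, Finset.sum_sub_distrib, ← Finset.mul_sum]
          ring
  -- telescoping sum is nonpositive
  have tele := Finset.sum_range_sub (fun n => ∑ s, ∑ a, d n s a * (Vhat n s - Vstar n s) ^ 2) H
  have hE2H : (∑ s, ∑ a, d H s a * (Vhat H s - Vstar H s) ^ 2) = 0 := by
    refine Finset.sum_eq_zero fun s _ => Finset.sum_eq_zero fun a _ => ?_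
    rw [hVhatH, hVstarH]
    ring
  have hE20 : 0 ≤ ∑ s, ∑ a, d 0 s a * (Vhat 0 s - Vstar 0 s) ^ 2 :=
    Finset.sum_nonneg fun s _ => Finset.sum_nonneg fun a _ =>
      mul_nonneg (hd_nonneg 0 s a) (sq_nonneg _)
  have hA_nonneg : 0 ≤ A := by
    rw [hA]
    exact Finset.sum_nonneg fun h _ => Finset.sum_nonneg fun s _ => Finset.sum_nonneg fun a _ =>
      mul_nonneg (hd_nonneg h s a)
        (aux_var_nonneg (Pstar s a) (Vhat (h+1)) (hPstar s a).1 (hPstar s a).2)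
  -- main inequality
  have main : A ≤ 2 * B + 4 * (8 * Real.sqrt (22 * η * A) + 440 * η) := by
    have step1 : A ≤ 2 * B
        + 2 * ((∑ s, ∑ a, d H s a * (Vhat H s - Vstar H s) ^ 2)
            - (∑ s, ∑ a, d 0 s a * (Vhat 0 s - Vstar 0 s) ^ 2))
        + 4 * (∑ h ∈ Finset.range H, ∑ s, ∑ a, d h s a *
            |(∑ s', Phat s a s' * Vhat (h + 1) s') - (∑ s', Pstar s a s' * Vhat (h + 1) s')|) := by
      rw [hA, hB]
      calc (∑ h ∈ Finset.range H, ∑ s, ∑ a, d h s a *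
          ((∑ s', Pstar s a s' * (Vhat (h + 1) s') ^ 2) -
            (∑ s', Pstar s a s' * Vhat (h + 1) s') ^ 2))
          ≤ ∑ h ∈ Finset.range H, (2 * (∑ s, ∑ a, d h s a *
              ((∑ s', Pstar s a s' * (Vstar (h + 1) s') ^ 2) -
                (∑ s', Pstar s a s' * Vstar (h + 1) s') ^ 2))
            + 2 * ((∑ s, ∑ a, d (h+1) s a * (Vhat (h+1) s - Vstar (h+1) s) ^ 2)
                - (∑ s, ∑ a, d h s a * (Vhat h s - Vstar h s) ^ 2))
            + 4 * (∑ s, ∑ a, d h s a *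
                |(∑ s', Phat s a s' * Vhat (h + 1) s') - (∑ s', Pstar s a s' * Vhat (h + 1) s')|)) :=
            Finset.sum_le_sum key_h
        _ = _ := by
            simp only [Finset.sum_add_distrib, ← Finset.mul_sum, tele]
    have := hmean
    linarith [step1, hE20, hE2H.le, hE2H.ge, hmean]
  -- final arithmetic
  have ht0 : 0 ≤ Real.sqrt (22 * η * A) := Real.sqrt_nonneg _
  have ht : Real.sqrt (22 * η * A) ^ 2 = 22 * η * A := Real.sq_sqrt (by positivity)
  have hsq : 32 * Real.sqrt (22 * η * A) ≤ A / 2 + 11264 * η := by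
    nlinarith [ht, ht0, hA_nonneg, hη, sq_nonneg (A / 2 - 11264 * η),
      sq_nonneg (A / 2 + 11264 * η - 32 * Real.sqrt (22 * η * A))]
  linarith [main, hsq]
end

section
/- Let X be a nonempty set, Ψ a nonempty set of functions g : X → ℝ, ε > 0, 0 < ρ ≤ 1, λ ≥ 0, and suppose d ∈ ℕ is such that every ε-independent sequence for Ψ has length at most d. Then for any x_1,…,x_n ∈ X and any g_1,…,g_n ∈ Ψ, the set { i ∈ {1,…,n} : ε < |g_i(x_i)| ≤ 2ε and |g_i(x_i)| ≥ (ρ/2)·(λ + ∑_{t=1}^{i−1} |g_i(x_t)|) } has cardinality at most 5·d/ρ. (Peeling bound from the proof of the self-normalized sum lemma.) -/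
open Finset

/-!
Colour the indices `i` of the peeled set `T` greedily, in increasing order: `i` gets the least
colour `c` such that the earlier members of `T` of colour `c` carry total weight
`∑ |g i (x j)| ≤ ε`. Each colour class, read in increasing order, is then `ε`-independent
(witnessed by `g i` at the index `i`), so it has at most `d` elements. If `i` has colour `k`,
each of the colours below `k` carried weight `> ε`, so `k ε ≤ ∑_{t < i} |g i (x t)| ≤ 4 ε / ρ`;
hence at most `4 / ρ + 1 ≤ 5 / ρ` colours occur.
-/

theorem Finset.map_orderEmbOfFin_Iio_s14 {α : Type*} [LinearOrder α] (s : Finset α) {k : ℕ}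
    (h : #s = k) (r : Fin k) :
    (Iio r).map (s.orderEmbOfFin h).toEmbedding = {j ∈ s | j < s.orderEmbOfFin h r} := by
  ext j
  constructor
  · simp only [mem_map, mem_Iio, mem_filter]
    rintro ⟨t, htr, rfl⟩
    exact ⟨orderEmbOfFin_mem s h t, (s.orderEmbOfFin h).strictMono htr⟩
  · intro hj
    obtain ⟨hjs, hjr⟩ := mem_filter.1 hj
    obtain ⟨t, rfl⟩ : j ∈ Set.range (s.orderEmbOfFin h) := by
      rwa [range_orderEmbOfFin]
    exact mem_map_of_mem _ (mem_Iio.2 ((s.orderEmbOfFin h).lt_iff_lt.1 hjr))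

namespace GreedyColoring

variable {ι : Type*} [LinearOrder ι] (w : ι → ι → ℝ) (T : Finset ι) (ε : ℝ)

def load (col : ι → ℕ) (i : ι) (c : ℕ) : ℝ := ∑ j ∈ {j ∈ T | j < i} with col j = c, w i j

variable {w T ε}

theorem load_congr {col col' : ι → ℕ} {i : ι} (h : ∀ j < i, col j = col' j) (c : ℕ) :
    load w T col i c = load w T col' i c := by
  unfold load
  congr 1
  exact filter_congr fun j hj => by rw [h j (mem_filter.1 hj).2]

theorem exists_load_le (hε : 0 ≤ ε) (col : ι → ℕ) (i : ι) : ∃ c, load w T col i c ≤ ε := by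
  obtain ⟨c, hc⟩ := Infinite.exists_notMem_finset ({j ∈ T | j < i}.image col)
  refine ⟨c, ?_⟩
  rw [load, filter_false_of_mem, sum_empty]
  · exact hε
  · rintro j hj rfl
    exact hc (mem_image_of_mem _ hj)

section
attribute [local instance] WellFoundedLT.toWellFoundedRelation
variable (w T ε)

/- Earlier colours are read through the truncation `if j < i then _ else 0` only to make the
recursion well founded; `greedyColor_eq` removes it. -/
noncomputable def greedyColor [WellFoundedLT ι] (i : ι) : ℕ :=
  sInf {c | load w T (fun j => if _h : j < i then greedyColor j else 0) i c ≤ ε}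
termination_by i
decreasing_by assumption

end

variable [WellFoundedLT ι]

theorem greedyColor_eq (i : ι) :
    greedyColor w T ε i = sInf {c | load w T (greedyColor w T ε) i c ≤ ε} := by
  rw [greedyColor]
  congr! 4 with c
  exact load_congr (fun j hj => by rw [dif_pos hj]) c

theorem load_greedyColor_le (hε : 0 ≤ ε) (i : ι) :
    load w T (greedyColor w T ε) i (greedyColor w T ε i) ≤ ε := by
  rw [greedyColor_eq i]
  exact Nat.sInf_mem (exists_load_le hε _ i)

theorem lt_load_of_lt_greedyColor {i : ι} {c : ℕ} (hc : c < greedyColor w T ε i) :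
    ε < load w T (greedyColor w T ε) i c := by
  rw [greedyColor_eq] at hc
  exact not_le.1 (Nat.notMem_of_lt_sInf hc)

theorem greedyColor_mul_le_sum {i : ι} (hw : ∀ j, 0 ≤ w i j) :
    greedyColor w T ε i * ε ≤ ∑ j ∈ T with j < i, w i j := by
  set k := greedyColor w T ε i
  calc (k : ℝ) * ε = ∑ _c ∈ range k, ε := by simp
    _ ≤ ∑ c ∈ range k, load w T (greedyColor w T ε) i c :=
      sum_le_sum fun c hc => (lt_load_of_lt_greedyColor (mem_range.1 hc)).le
    _ ≤ ∑ j ∈ T with j < i, w i j :=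
      sum_fiberwise_le_sum_of_sum_fiber_nonneg fun _ _ => sum_nonneg fun j _ => hw j

theorem sum_Iio_colorClass_le (hε : 0 ≤ ε) (c : ℕ) (r : Fin #{j ∈ T | greedyColor w T ε j = c}) :
    let e := {j ∈ T | greedyColor w T ε j = c}.orderEmbOfFin rfl
    ∑ s ∈ Iio r, w (e r) (e s) ≤ ε := by
  intro e
  have hc : greedyColor w T ε (e r) = c := (mem_filter.1 (orderEmbOfFin_mem _ rfl r)).2
  calc ∑ s ∈ Iio r, w (e r) (e s)
      = ∑ j ∈ {j ∈ T | greedyColor w T ε j = c} with j < e r, w (e r) j := by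
        rw [← map_orderEmbOfFin_Iio_s14, sum_map]; rfl
    _ = load w T (greedyColor w T ε) (e r) (greedyColor w T ε (e r)) := by
        rw [load, hc, filter_comm]
    _ ≤ ε := load_greedyColor_le hε _

end GreedyColoring

theorem peeling_bound_general {X : Type*}
    (Ψ : Set (X → ℝ))
    (ε : ℝ) (hε : 0 < ε) (ρ : ℝ) (hρ0 : 0 < ρ) (hρ1 : ρ ≤ 1) (lam : ℝ) (hlam : 0 ≤ lam)
    (d : ℕ) (hd : ∀ m : ℕ, ∀ a : Fin m → X, IsEpsIndep Ψ ε a → m ≤ d)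
    (n : ℕ) (x : Fin n → X) (g : Fin n → X → ℝ) (hg : ∀ i, g i ∈ Ψ) :
    (({i : Fin n | (ε < |g i (x i)| ∧ |g i (x i)| ≤ 2 * ε) ∧
        (ρ / 2) * (lam + ∑ t ∈ Finset.Iio i, |g i (x t)|) ≤ |g i (x i)|}.ncard : ℝ)) ≤
      5 * d / ρ := by
  classical
  set T : Finset (Fin n) := {i | (ε < |g i (x i)| ∧ |g i (x i)| ≤ 2 * ε) ∧
    (ρ / 2) * (lam + ∑ t ∈ Iio i, |g i (x t)|) ≤ |g i (x i)|}
  set col := GreedyColoring.greedyColor (fun i j => |g i (x j)|) T ε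
  have hcol : ∀ i ∈ T, col i ≤ ⌊4 / ρ⌋₊ := by
    intro i hi
    obtain ⟨⟨-, hle⟩, hpeel⟩ := (mem_filter.1 hi).2
    have hmul : col i * ε ≤ ∑ t ∈ Iio i, |g i (x t)| :=
      (GreedyColoring.greedyColor_mul_le_sum fun _ => abs_nonneg _).trans <|
        sum_le_sum_of_subset_of_nonneg (fun j hj => mem_Iio.2 (mem_filter.1 hj).2)
          fun _ _ _ => abs_nonneg _
    have hsum : ρ * ∑ t ∈ Iio i, |g i (x t)| ≤ 4 * ε := by nlinarith
    refine Nat.le_floor ((le_div_iff₀ hρ0).2 (le_of_mul_le_mul_right ?_ hε))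
    calc col i * ρ * ε = ρ * (col i * ε) := by ring
      _ ≤ 4 * ε := (mul_le_mul_of_nonneg_left hmul hρ0.le).trans hsum
  have hclass : ∀ c, #{i ∈ T | col i = c} ≤ d := fun c =>
    hd _ _ fun r => ⟨g _, hg _, GreedyColoring.sum_Iio_colorClass_le hε.le c r,
      (mem_filter.1 (filter_subset _ _ (orderEmbOfFin_mem _ rfl r))).2.1.1⟩
  have hcard : #T ≤ d * (⌊4 / ρ⌋₊ + 1) := by
    simpa using card_le_mul_card_image_of_maps_to
      (fun i hi => mem_range.2 (Nat.lt_succ_of_le (hcol i hi))) d fun c _ => hclass c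
  rw [← coe_filter_univ, Set.ncard_coe_finset]
  calc (#T : ℝ) ≤ d * (⌊4 / ρ⌋₊ + 1) := mod_cast hcard
    _ ≤ d * (4 / ρ + 1 / ρ) := by
        gcongr
        · exact Nat.floor_le (by positivity)
        · exact one_le_one_div hρ0 hρ1
    _ = 5 * d / ρ := by ring

/-- peeling bound from the proof of the self-normalized sum lemma. -/
theorem peeling_bound {X : Type*} [Nonempty X]
    (Ψ : Set (X → ℝ)) (hΨne : Ψ.Nonempty)
    (ε : ℝ) (hε : 0 < ε) (ρ : ℝ) (hρ0 : 0 < ρ) (hρ1 : ρ ≤ 1) (lam : ℝ) (hlam : 0 ≤ lam)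
    (d : ℕ) (hd : ∀ m : ℕ, ∀ a : Fin m → X, IsEpsIndep Ψ ε a → m ≤ d)
    (n : ℕ) (x : Fin n → X) (g : Fin n → X → ℝ) (hg : ∀ i, g i ∈ Ψ) :
    (({i : Fin n | (ε < |g i (x i)| ∧ |g i (x i)| ≤ 2 * ε) ∧
        (ρ / 2) * (lam + ∑ t ∈ Finset.Iio i, |g i (x t)|) ≤ |g i (x i)|}.ncard : ℝ)) ≤
      5 * d / ρ :=
  peeling_bound_general Ψ ε hε ρ hρ0 hρ1 lam hlam d hd n x g hg
end
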